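/- arXiv:1509.07248 — 7 statements merged into one kernel-verified Lean document; each statement's English description precedes it below -/
import Mathlib

section
/- If (K,L) is a finite Gelfand pair, then the zonal spherical functions ω_0,...,ω_{s-1} form a basis of the Hecke algebra of bi-L-invariant functions on K, where s is the number of double cosets L\K/L. -/
open scoped BigOperators

attribute [local instance] Classical.propDecidable

noncomputable def avgIdem (K : Type) [Group K] [Fintype K] (L : Subgroup K) :
    MonoidAlgebra ℂ K :=
  (Fintype.card L : ℂ)⁻¹ • ∑ h : L, MonoidAlgebra.of ℂ K (h : K)

def IsGelfandPair (K : Type) [Group K] [Fintype K] (L : Subgroup K) : Prop :=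
  ∀ x y : MonoidAlgebra ℂ K,
    (avgIdem K L * x * avgIdem K L) * (avgIdem K L * y * avgIdem K L) =
      (avgIdem K L * y * avgIdem K L) * (avgIdem K L * x * avgIdem K L)

/-- the permutation character of `K` acting on `K ⧸ L` (the character of `ℂK e_L`) -/
noncomputable def permChar (K : Type) [Group K] [Fintype K] (L : Subgroup K) (g : K) : ℕ :=
  Nat.card {x : K ⧸ L // g • x = x}

/-- the space of bi-`L`-invariant functions on `K` (the Hecke algebra, as a subspace of
functions `K → ℂ`) -/
noncomputable def heckeSpace (K : Type) [Group K] (L : Subgroup K) : Submodule ℂ (K → ℂ) where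
  carrier := {f : K → ℂ | ∀ g : K, ∀ h ∈ L, ∀ h' ∈ L, f (h * g * h') = f g}
  add_mem' := by
    intro a b ha hb g h hh h' hh'
    simp only [Pi.add_apply, ha g h hh h' hh', hb g h hh h' hh']
  zero_mem' := by
    intro g h hh h' hh'
    rfl
  smul_mem' := by
    intro c a ha g h hh h' hh'
    simp only [Pi.smul_apply, ha g h hh h' hh']

/-! Write `χ_i` for the character of `V i` and `π = ∑ χ_i` for the permutation character of
`K ⧸ L`. Frobenius reciprocity for `π` and orthogonality of the `χ_i` give
`∑_{h ∈ L} χ_i(h) = |L|`. Summing over `i` and comparing with Burnside's lemma for `L` acting on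
`K ⧸ L`, whose orbits are the double cosets, yields `s = |L \ K / L|`, the dimension of the Hecke
algebra. The `ω_i` are bi-`L`-invariant, and they are linearly independent because the
convolution identity `χ_i * χ_j = δ_ij (|K| / χ_j(1)) χ_j` (Schur's lemma) makes the pairing of
`conj ω_i` with `χ_j` equal to `δ_ij |K| / χ_j(1)`. -/

open CategoryTheory Module MulAction

lemma LinearIndependent.star {ι R M : Type*} [CommSemiring R] [StarRing R] [AddCommMonoid M]
    [Module R M] [StarAddMonoid M] [StarModule R M] {v : ι → M} (hv : LinearIndependent R v) :
    LinearIndependent R (star v) :=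
  hv.map_of_injective_injectiveₛ Star.star (starAddEquiv : M ≃+ M).toAddMonoidHom star_injective
    starAddEquiv.injective fun r m => by simp [star_smul]

namespace FDRep

lemma exists_eq_smul_id_of_comm {k G : Type*} [Field k] [IsAlgClosed k] [Monoid G]
    (W : FDRep k G) [Simple W] (T : W →ₗ[k] W) (hT : ∀ g, T ∘ₗ W.ρ g = W.ρ g ∘ₗ T) :
    ∃ c : k, T = c • LinearMap.id := by
  let f : W ⟶ W := ⟨FGModuleCat.ofHom T, fun g => by ext x; exact LinearMap.congr_fun (hT g) x⟩
  have hrank : finrank k (W ⟶ W) = 1 := by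
    rw [finrank_hom_simple_simple, if_pos ⟨Iso.refl W⟩]
  obtain ⟨c, hc⟩ := (finrank_eq_one_iff_of_nonzero' (𝟙 W) (id_nonzero W)).mp hrank f
  exact ⟨c, by ext x; exact (congrArg (fun m : W ⟶ W => m.hom.hom x) hc).symm⟩

variable {k G : Type*} [Field k] [IsAlgClosed k] [CharZero k] [Group G] [Fintype G]

lemma sum_char_mul_char_inv (V W : FDRep k G) [Simple V] [Simple W] :
    ∑ g : G, V.character g * W.character g⁻¹ =
      if Nonempty (V ≅ W) then (Fintype.card G : k) else 0 := by
  have hG : (Fintype.card G : k) ≠ 0 := Nat.cast_ne_zero.mpr Fintype.card_ne_zero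
  have : Invertible (Nat.card G : k) := invertibleOfNonzero (by rwa [Nat.card_eq_fintype_card])
  have h := char_orthonormal V W
  rw [Nat.card_eq_fintype_card, inv_mul_eq_iff_eq_mul₀ hG] at h
  rw [h]
  split_ifs <;> simp

lemma char_one_mul_sum_char_mul_char_inv_mul (V W : FDRep k G) [Simple V] [Simple W] (t : G) :
    W.character 1 * ∑ g : G, V.character g * W.character (g⁻¹ * t) =
      (if Nonempty (V ≅ W) then (Fintype.card G : k) else 0) * W.character t := by
  set T : Module.End k W := ∑ g : G, V.character g • W.ρ g⁻¹ with hT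
  have hcomm : ∀ h : G, T ∘ₗ W.ρ h = W.ρ h ∘ₗ T := by
    intro h
    change T * W.ρ h = W.ρ h * T
    rw [hT, Finset.sum_mul, Finset.mul_sum]
    refine Fintype.sum_equiv (MulAut.conj h⁻¹).toEquiv _ _ fun g => ?_
    change V.character g • W.ρ g⁻¹ * W.ρ h =
      W.ρ h * (V.character (h⁻¹ * g * h⁻¹⁻¹) • W.ρ (h⁻¹ * g * h⁻¹⁻¹)⁻¹)
    rw [smul_mul_assoc, mul_smul_comm, char_conj, ← map_mul, ← map_mul]
    congr 2
    group
  obtain ⟨c, hc⟩ := exists_eq_smul_id_of_comm W T hcomm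
  have trace_mul : ∀ t, LinearMap.trace k W (T * W.ρ t) =
      ∑ g : G, V.character g * W.character (g⁻¹ * t) := by
    intro t
    simp only [hT, Finset.sum_mul, map_sum, smul_mul_assoc, map_smul, smul_eq_mul, ← map_mul]
    rfl
  have trace_eq : ∀ t, LinearMap.trace k W (T * W.ρ t) = c * W.character t := by
    intro t
    rw [hc, smul_mul_assoc, map_smul]
    rfl
  have hc' : c * W.character 1 = if Nonempty (V ≅ W) then (Fintype.card G : k) else 0 := by
    rw [← sum_char_mul_char_inv, ← trace_eq, trace_mul]
    simp
  rw [← trace_mul, trace_eq, ← hc']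
  ring

lemma sum_char_mul_char_inv_eq_ite {ι : Type*} {V : ι → FDRep k G} [∀ i, Simple (V i)]
    (hdistinct : ∀ i j, Nonempty (V i ≅ V j) → i = j) (i j : ι) :
    ∑ g : G, (V i).character g * (V j).character g⁻¹ =
      if i = j then (Fintype.card G : k) else 0 := by
  rw [sum_char_mul_char_inv]
  by_cases hij : i = j
  · subst hij
    rw [if_pos ⟨Iso.refl _⟩, if_pos rfl]
  · rw [if_neg fun hiso => hij (hdistinct i j hiso), if_neg hij]

end FDRep

namespace DoubleCoset

variable {G : Type*} [Group G]

noncomputable def quotientEquivOrbitRelQuotient (H K : Subgroup G) :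
    Quotient (H : Set G) K ≃ orbitRel.Quotient H (G ⧸ K) :=
  (Quotient.congrRight fun a b => by
      change setoid (H : Set G) K a b ↔
        (⟦(a : G ⧸ K)⟧ : orbitRel.Quotient H (G ⧸ K)) = ⟦(b : G ⧸ K)⟧
      rw [rel_iff, Quotient.eq, orbitRel_apply, mem_orbit_iff]
      constructor
      · rintro ⟨x, hx, y, hy, rfl⟩
        refine ⟨⟨x, hx⟩⁻¹, QuotientGroup.eq.mpr ?_⟩
        simpa [Subgroup.smul_def, mul_assoc] using hy
      · rintro ⟨⟨x, hx⟩, hxb⟩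
        obtain ⟨y, hy, hya⟩ : ∃ y ∈ K, x * b * y = a := by
          refine ⟨(x * b)⁻¹ * a, QuotientGroup.eq.mp hxb, by group⟩
        refine ⟨x⁻¹, H.inv_mem hx, y⁻¹, K.inv_mem hy, ?_⟩
        rw [← hya]
        group).trans
    (Setoid.quotientKerEquivOfSurjective _
      (Quotient.mk''_surjective.comp QuotientGroup.mk_surjective))

end DoubleCoset

variable {K : Type} [Group K] [Fintype K] (L : Subgroup K)

lemma sum_subgroup_permChar :
    ∑ h : L, permChar K L h = Fintype.card L * Nat.card (DoubleCoset.Quotient (L : Set K) L) := by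
  rw [Nat.card_congr (DoubleCoset.quotientEquivOrbitRelQuotient L L), Nat.card_eq_fintype_card,
    mul_comm, ← sum_card_fixedBy_eq_card_orbits_mul_card_group]
  refine Finset.sum_congr rfl fun h _ => ?_
  rw [permChar, Nat.card_eq_fintype_card]
  rfl

lemma sum_permChar_mul {R : Type*} [CommSemiring R] (f : K → R)
    (hf : ∀ g x, f (x * g * x⁻¹) = f g) :
    ∑ g : K, (permChar K L g : R) * f g = Fintype.card (K ⧸ L) * ∑ h : L, f h := by
  have stabilizer_sum : ∀ x : K ⧸ L, ∑ g : K, (if g • x = x then f g else 0) = ∑ h : L, f h := by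
    intro x
    obtain ⟨a, rfl⟩ := QuotientGroup.mk_surjective x
    calc ∑ g : K, (if g • (a : K ⧸ L) = a then f g else 0)
        = ∑ g : K, if g ∈ L then f g else 0 := by
          refine (Fintype.sum_equiv (MulAut.conj a).toEquiv _ _ fun g => ?_).symm
          have hmem : ((a * g : K) : K ⧸ L) = a ↔ g ∈ L := by
            rw [QuotientGroup.eq, show (a * g)⁻¹ * a = g⁻¹ by group, L.inv_mem_iff]
          simp [hmem, hf]
      _ = ∑ h : L, f h := by
          rw [← Finset.sum_filter]
          exact Finset.sum_subtype _ (by simp) f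
  calc ∑ g : K, (permChar K L g : R) * f g
      = ∑ g : K, ∑ x : K ⧸ L, if g • x = x then f g else 0 := by
        refine Finset.sum_congr rfl fun g _ => ?_
        rw [permChar, Nat.card_eq_fintype_card, Fintype.card_subtype, Finset.sum_ite,
          Finset.sum_const_zero, add_zero, Finset.sum_const, nsmul_eq_mul]
    _ = ∑ x : K ⧸ L, ∑ h : L, f h := by
        rw [Finset.sum_comm]
        exact Finset.sum_congr rfl fun x _ => stabilizer_sum x
    _ = Fintype.card (K ⧸ L) * ∑ h : L, f h := by simp

/-- The zonal spherical function of `V` is `star (rightAverage L V.character)`. -/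
noncomputable def rightAverage (f : K → ℂ) (g : K) : ℂ :=
  (Fintype.card L : ℂ)⁻¹ * ∑ h : L, f (g * h)

lemma star_rightAverage (f : K → ℂ) : star (rightAverage L f) = rightAverage L (star f) := by
  ext g
  simp [rightAverage]

lemma rightAverage_mem_heckeSpace (f : K → ℂ) (hf : ∀ x y, f (x * y) = f (y * x)) :
    rightAverage L f ∈ heckeSpace K L := by
  intro g h hh h' hh'
  simp only [rightAverage]
  congr 1
  refine Fintype.sum_equiv ((Equiv.mulLeft ⟨h', hh'⟩).trans (Equiv.mulRight ⟨h, hh⟩)) _ _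
    fun t => ?_
  change f (h * g * h' * t) = f (g * (h' * t * h))
  rw [show h * g * h' * t = h * (g * (h' * t)) by group, hf, mul_assoc, mul_assoc]

noncomputable def heckeSpaceEquiv :
    heckeSpace K L ≃ₗ[ℂ] (DoubleCoset.Quotient (L : Set K) L → ℂ) where
  toFun f q := (f : K → ℂ) q.out
  map_add' _ _ := rfl
  map_smul' _ _ := rfl
  invFun u := ⟨fun g => u (DoubleCoset.mk L L g), fun g h hh h' hh' =>
    congrArg u ((DoubleCoset.eq L L _ _).mpr ⟨h⁻¹, L.inv_mem hh, h'⁻¹, L.inv_mem hh', by group⟩)⟩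
  left_inv f := by
    ext g
    obtain ⟨x, y, hx, hy, hg⟩ := DoubleCoset.mk_out_eq_mul L L g
    change (f : K → ℂ) _ = (f : K → ℂ) g
    rw [hg]
    exact f.2 g x hx y hy
  right_inv u := by
    ext q
    exact congrArg u (DoubleCoset.out_eq' L L q)

lemma finrank_heckeSpace :
    finrank ℂ (heckeSpace K L) = Nat.card (DoubleCoset.Quotient (L : Set K) L) := by
  have : Fintype (DoubleCoset.Quotient (L : Set K) L) := Quotient.fintype _
  rw [(heckeSpaceEquiv L).finrank_eq, finrank_pi, Nat.card_eq_fintype_card]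

section MultiplicityFree

variable {L} {ι : Type*} [Fintype ι] {V : ι → FDRep ℂ K} [∀ i, Simple (V i)]

lemma sum_subgroup_char_eq_card (hdistinct : ∀ i j, Nonempty (V i ≅ V j) → i = j)
    (hdecomp : ∀ g : K, (permChar K L g : ℂ) = ∑ i, (V i).character g) (i : ι) :
    ∑ h : L, (V i).character h = Fintype.card L := by
  have hpair : ∑ g : K, (permChar K L g : ℂ) * (V i).character g⁻¹ = Fintype.card K := by
    simp_rw [hdecomp, Finset.sum_mul]
    rw [Finset.sum_comm]
    simp [FDRep.sum_char_mul_char_inv_eq_ite hdistinct]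
  have hfrob := sum_permChar_mul L (fun g => (V i).character g⁻¹) fun g x => by
    simp only [mul_inv_rev, inv_inv, ← mul_assoc, FDRep.char_conj]
  have hindex : (Fintype.card K : ℂ) = Fintype.card (K ⧸ L) * Fintype.card L := by
    simp only [← Nat.card_eq_fintype_card]
    exact_mod_cast Subgroup.card_eq_card_quotient_mul_card_subgroup L
  rw [hpair, hindex] at hfrob
  have hinv := mul_left_cancel₀ (Nat.cast_ne_zero.mpr Fintype.card_ne_zero) hfrob
  rw [hinv]
  exact Fintype.sum_equiv (Equiv.inv L) _ _ fun h => by simp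

lemma card_eq_card_doubleCoset (hdistinct : ∀ i j, Nonempty (V i ≅ V j) → i = j)
    (hdecomp : ∀ g : K, (permChar K L g : ℂ) = ∑ i, (V i).character g) :
    Fintype.card ι = Nat.card (DoubleCoset.Quotient (L : Set K) L) := by
  have hcount : (Fintype.card L * Fintype.card ι : ℂ) =
      Fintype.card L * Nat.card (DoubleCoset.Quotient (L : Set K) L) := by
    calc (Fintype.card L * Fintype.card ι : ℂ)
        = ∑ i, ∑ h : L, (V i).character h := by
          simp [sum_subgroup_char_eq_card hdistinct hdecomp, mul_comm]
      _ = ∑ h : L, (permChar K L h : ℂ) := by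
          rw [Finset.sum_comm]
          simp [hdecomp]
      _ = Fintype.card L * Nat.card (DoubleCoset.Quotient (L : Set K) L) := by
          exact_mod_cast sum_subgroup_permChar L
  exact_mod_cast mul_left_cancel₀ (Nat.cast_ne_zero.mpr Fintype.card_ne_zero) hcount

lemma char_one_mul_sum_rightAverage_mul_char_inv
    (hdistinct : ∀ i j, Nonempty (V i ≅ V j) → i = j)
    (hdecomp : ∀ g : K, (permChar K L g : ℂ) = ∑ i, (V i).character g) (i j : ι) :
    (V j).character 1 * ∑ g : K, rightAverage L (V i).character g * (V j).character g⁻¹ =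
      if i = j then (Fintype.card K : ℂ) else 0 := by
  have hconv : ∀ h : L, (V j).character 1 * ∑ g : K, (V i).character (g * h) * (V j).character g⁻¹
      = (if i = j then (Fintype.card K : ℂ) else 0) * (V j).character h := by
    intro h
    have hiso : Nonempty (V i ≅ V j) ↔ i = j := ⟨hdistinct i j, fun hij => hij ▸ ⟨Iso.refl _⟩⟩
    rw [← if_congr hiso rfl rfl, ← FDRep.char_one_mul_sum_char_mul_char_inv_mul]
    congr 1
    refine Fintype.sum_equiv (Equiv.mulRight (h : K)) _ _ fun g => ?_
    simp only [Equiv.coe_mulRight, mul_inv_rev]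
    rw [FDRep.char_mul_comm (V j), mul_inv_cancel_left]
  calc (V j).character 1 * ∑ g : K, rightAverage L (V i).character g * (V j).character g⁻¹
      = (Fintype.card L : ℂ)⁻¹ * ∑ h : L,
          (V j).character 1 * ∑ g : K, (V i).character (g * h) * (V j).character g⁻¹ := by
        simp only [rightAverage, Finset.mul_sum, Finset.sum_mul]
        rw [Finset.sum_comm]
        exact Finset.sum_congr rfl fun _ _ => Finset.sum_congr rfl fun _ _ => by ring
    _ = if i = j then (Fintype.card K : ℂ) else 0 := by
        simp_rw [hconv, ← Finset.mul_sum, sum_subgroup_char_eq_card hdistinct hdecomp]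
        field_simp

lemma linearIndependent_rightAverage_char (hdistinct : ∀ i j, Nonempty (V i ≅ V j) → i = j)
    (hdecomp : ∀ g : K, (permChar K L g : ℂ) = ∑ i, (V i).character g) :
    LinearIndependent ℂ fun i => rightAverage L (V i).character := by
  let pairing : ι → Module.Dual ℂ (K → ℂ) := fun j =>
    ((V j).character 1 / Fintype.card K) • ∑ g : K, (V j).character g⁻¹ • LinearMap.proj g
  have hpairing : ∀ i j, pairing j (rightAverage L (V i).character) = if j = i then 1 else 0 := by
    intro i j
    have hK : (Fintype.card K : ℂ) ≠ 0 := Nat.cast_ne_zero.mpr Fintype.card_ne_zero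
    simp only [pairing, LinearMap.smul_apply, LinearMap.sum_apply, LinearMap.proj_apply,
      smul_eq_mul]
    rw [Finset.sum_congr rfl fun g _ => mul_comm ((V j).character g⁻¹) _, div_mul_eq_mul_div,
      div_eq_iff hK, char_one_mul_sum_rightAverage_mul_char_inv hdistinct hdecomp i j]
    by_cases hij : i = j <;> simp [hij, Ne.symm]
  exact .of_pairwise_dual_eq_zero_one _ pairing (fun j i hji => by simp [hpairing, hji])
    fun i => by simp [hpairing]

end MultiplicityFree

theorem zsf_basis_of_hecke_general
    (K : Type) [Group K] [Fintype K] (L : Subgroup K)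
    (s : ℕ) (V : Fin s → FDRep ℂ K)
    (hsimple : ∀ i, CategoryTheory.Simple (V i))
    (hdistinct : ∀ i j : Fin s, Nonempty (V i ≅ V j) → i = j)
    (hdecomp : ∀ g : K, (permChar K L g : ℂ) = ∑ i : Fin s, FDRep.character (V i) g)
    (ω : Fin s → K → ℂ)
    (hω : ∀ i g, ω i g =
      (Fintype.card L : ℂ)⁻¹ *
        ∑ h : L, (starRingEnd ℂ) (FDRep.character (V i) (g * (h : K)))) :
    LinearIndependent ℂ ω ∧
      Submodule.span ℂ (Set.range ω) = heckeSpace K L ∧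
      s = Nat.card (DoubleCoset.Quotient (L : Set K) (L : Set K)) := by
  have hω_eq : ω = fun i => rightAverage L (star (V i).character) := funext₂ hω
  have hindep : LinearIndependent ℂ ω := by
    simp_rw [hω_eq, ← star_rightAverage]
    exact (linearIndependent_rightAverage_char hdistinct hdecomp).star
  have hcard : s = Nat.card (DoubleCoset.Quotient (L : Set K) L) := by
    simpa using card_eq_card_doubleCoset hdistinct hdecomp
  have hle : Submodule.span ℂ (Set.range ω) ≤ heckeSpace K L := by
    rw [Submodule.span_le, hω_eq]
    rintro _ ⟨i, rfl⟩
    exact rightAverage_mem_heckeSpace L _ fun x y => by simp [FDRep.char_mul_comm]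
  refine ⟨hindep, Submodule.eq_of_le_of_finrank_le hle ?_, hcard⟩
  rw [finrank_heckeSpace, finrank_span_eq_card hindep, Fintype.card_fin, hcard]

/-- For a Gelfand pair `(K, L)`, the zonal spherical functions `ω_0, …, ω_{s-1}` form a
basis of the Hecke algebra of bi-`L`-invariant functions on `K`, where `s` is the number of
double cosets `L \ K / L`. -/
theorem zsf_basis_of_hecke
    (K : Type) [Group K] [Fintype K] (L : Subgroup K)
    (hGP : IsGelfandPair K L)
    (s : ℕ) (V : Fin s → FDRep ℂ K)
    (hsimple : ∀ i, CategoryTheory.Simple (V i))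
    (hdistinct : ∀ i j : Fin s, Nonempty (V i ≅ V j) → i = j)
    (hdecomp : ∀ g : K, (permChar K L g : ℂ) = ∑ i : Fin s, FDRep.character (V i) g)
    (ω : Fin s → K → ℂ)
    (hω : ∀ i g, ω i g =
      (Fintype.card L : ℂ)⁻¹ *
        ∑ h : L, (starRingEnd ℂ) (FDRep.character (V i) (g * (h : K)))) :
    LinearIndependent ℂ ω ∧
      Submodule.span ℂ (Set.range ω) = heckeSpace K L ∧
      s = Nat.card (DoubleCoset.Quotient (L : Set K) (L : Set K)) :=
  zsf_basis_of_hecke_general K L s V hsimple hdistinct hdecomp ω hω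
end

section
/- If (K,L) is a finite Gelfand pair, then the wreath product pair (K ≀ S_n, L ≀ S_n) is also a Gelfand pair. -/
open scoped BigOperators

attribute [local instance] Classical.propDecidable

/-- permutation action of `S_n` on `K^n` by automorphisms -/
def permAut (n : ℕ) (K : Type) [Group K] : Equiv.Perm (Fin n) →* MulAut (Fin n → K) where
  toFun σ :=
    { Equiv.arrowCongr σ (Equiv.refl K) with
      map_mul' := fun f g => rfl }
  map_one' := by ext f i; rfl
  map_mul' := by intro σ τ; ext f i; rfl

/-- the wreath product `K ≀ S_n` -/
abbrev Wreath (n : ℕ) (K : Type) [Group K] : Type :=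
  SemidirectProduct (Fin n → K) (Equiv.Perm (Fin n)) (permAut n K)

noncomputable instance (n : ℕ) (K : Type) [Group K] [Fintype K] : Fintype (Wreath n K) :=
  Fintype.ofEquiv ((Fin n → K) × Equiv.Perm (Fin n))
    { toFun := fun p => ⟨p.1, p.2⟩
      invFun := fun w => (w.left, w.right)
      left_inv := fun _ => rfl
      right_inv := fun _ => rfl }

/-- the subgroup `L ≀ S_n` of `K ≀ S_n` -/
def wreathSubgroup (n : ℕ) (K : Type) [Group K] (L : Subgroup K) : Subgroup (Wreath n K) where
  carrier := {w : Wreath n K | ∀ i : Fin n, w.left i ∈ L}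
  one_mem' := by
    intro i
    simp only [SemidirectProduct.one_left, Pi.one_apply]
    exact L.one_mem
  mul_mem' := by
    intro a b ha hb i
    rw [SemidirectProduct.mul_left]
    exact L.mul_mem (ha i) (hb _)
  inv_mem' := by
    intro a ha i
    rw [SemidirectProduct.inv_left]
    exact L.inv_mem (ha _)

/-!
Write `e_H ∈ ℂ[G]` for the averaging idempotent of `H ≤ G`; `(G, H)` is a Gelfand pair iff
`e_H g e_H g' e_H` is symmetric in `g, g'`.

For a product `∏ K_i ⊇ ∏ L_i`, the idempotent of `∏ L_i` is `e_{L_i}` times the idempotent of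
the other coordinates, and everything living on coordinate `i` commutes with everything living on
the others. So `e g e g' e` splits as a product of a coordinate-`i` Hecke word and a word in the
remaining coordinates, and the Gelfand property of `(K_i, L_i)` swaps the `i`-th coordinates of
`g` and `g'`; swapping all coordinates one at a time swaps `g` and `g'`.

For `N ⋊ P ⊇ M ⋊ P` the idempotent factors as `e_M e_P`. Since `P` is absorbed by the outer
idempotents, only the `N`-parts `u, v` of `g, g'` matter, and expanding the middle `e_P` writes
`e u e v e` as the average over `p ∈ P` of `e u e_M (p v p⁻¹) e`. The Gelfand property of
`(N, M)` swaps the two `N`-elements, and since `P` normalises `M`, conjugating by `p` and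
reindexing `p ↦ p⁻¹` gives back the average for `e v e u e`. The wreath product is the case
`N = K^n`, `M = L^n`, `P = S_n`.
-/

open MonoidAlgebra Function
open scoped Pointwise

local notation "δ" => MonoidAlgebra.of ℂ _

section Hecke

variable {G : Type} [Group G]

theorem mapDomainAlgHom_of {G' : Type} [Group G'] (f : G →* G') (g : G) :
    mapDomainAlgHom ℂ ℂ f (δ g) = δ (f g) := by
  simp [MonoidAlgebra.of_apply]

theorem mapDomainAlgHom_conj (g : G) (x : MonoidAlgebra ℂ G) :
    mapDomainAlgHom ℂ ℂ (MulAut.conj g : G →* G) x = δ g * x * δ g⁻¹ := by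
  induction x using MonoidAlgebra.induction_on with
  | of h => rw [mapDomainAlgHom_of, ← map_mul, ← map_mul]; rfl
  | add x y hx hy => rw [map_add, hx, hy, mul_add, add_mul]
  | smul c x hx => rw [map_smul, hx, mul_smul_comm, smul_mul_assoc]

variable [Fintype G]

theorem mul_avgIdem_eq_self {T : Subgroup G} {x : MonoidAlgebra ℂ G}
    (h : ∀ t ∈ T, x * δ t = x) : x * avgIdem G T = x := by
  rw [avgIdem, mul_smul_comm, Finset.mul_sum, Finset.sum_congr rfl fun t _ => h _ t.2,
    Finset.sum_const, Finset.card_univ, ← Nat.cast_smul_eq_nsmul ℂ, smul_smul,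
    inv_mul_cancel₀ (by exact_mod_cast Fintype.card_ne_zero), one_smul]

theorem avgIdem_mul_eq_self {T : Subgroup G} {x : MonoidAlgebra ℂ G}
    (h : ∀ t ∈ T, δ t * x = x) : avgIdem G T * x = x := by
  rw [avgIdem, smul_mul_assoc, Finset.sum_mul, Finset.sum_congr rfl fun t _ => h _ t.2,
    Finset.sum_const, Finset.card_univ, ← Nat.cast_smul_eq_nsmul ℂ, smul_smul,
    inv_mul_cancel₀ (by exact_mod_cast Fintype.card_ne_zero), one_smul]

theorem avgIdem_mul_of {S : Subgroup G} {s : G} (hs : s ∈ S) :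
    avgIdem G S * δ s = avgIdem G S := by
  rw [avgIdem, smul_mul_assoc, Finset.sum_mul]
  congr 1
  exact Fintype.sum_equiv (Equiv.mulRight ⟨s, hs⟩) _ _ fun t => (map_mul _ _ _).symm

theorem of_mul_avgIdem {S : Subgroup G} {s : G} (hs : s ∈ S) :
    δ s * avgIdem G S = avgIdem G S := by
  rw [avgIdem, mul_smul_comm, Finset.mul_sum]
  congr 1
  exact Fintype.sum_equiv (Equiv.mulLeft ⟨s, hs⟩) _ _ fun t => (map_mul _ _ _).symm

theorem avgIdem_mul_avgIdem_of_le_right {S T : Subgroup G} (h : T ≤ S) :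
    avgIdem G S * avgIdem G T = avgIdem G S :=
  mul_avgIdem_eq_self fun _ ht => avgIdem_mul_of (h ht)

theorem avgIdem_mul_avgIdem_of_le_left {S T : Subgroup G} (h : T ≤ S) :
    avgIdem G T * avgIdem G S = avgIdem G S :=
  avgIdem_mul_eq_self fun _ ht => of_mul_avgIdem (h ht)

theorem isIdempotentElem_avgIdem (S : Subgroup G) : IsIdempotentElem (avgIdem G S) :=
  avgIdem_mul_avgIdem_of_le_right le_rfl

theorem avgIdem_mul_avgIdem_of_disjoint {A B S : Subgroup G} (hAB : Disjoint A B)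
    (hS : (S : Set G) = (A : Set G) * B) : avgIdem G A * avgIdem G B = avgIdem G S := by
  have hmem (p : A × B) : (p.1 * p.2 : G) ∈ S := by
    rw [← SetLike.mem_coe, hS]; exact Set.mul_mem_mul p.1.2 p.2.2
  let mulEquiv : A × B ≃ S := Equiv.ofBijective (fun p => ⟨p.1 * p.2, hmem p⟩) <| by
    refine ⟨fun p q h => Subgroup.mul_injective_of_disjoint hAB (congrArg Subtype.val h), ?_⟩
    rintro ⟨s, hs⟩
    rw [← SetLike.mem_coe, hS] at hs
    obtain ⟨a, ha, b, hb, rfl⟩ := hs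
    exact ⟨(⟨a, ha⟩, ⟨b, hb⟩), rfl⟩
  rw [avgIdem, avgIdem, avgIdem, smul_mul_smul_comm, Finset.sum_mul_sum, ← mul_inv,
    ← Nat.cast_mul, ← Fintype.card_prod, Fintype.card_congr mulEquiv, ← Finset.sum_product']
  congr 1
  exact Fintype.sum_equiv mulEquiv _ _ fun p => (map_mul _ _ _).symm

theorem mapDomainAlgHom_avgIdem {G' : Type} [Group G'] [Fintype G'] (S : Subgroup G)
    {f : G →* G'} (hf : Injective f) :
    mapDomainAlgHom ℂ ℂ f (avgIdem G S) = avgIdem G' (S.map f) := by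
  let e := S.equivMapOfInjective f hf
  rw [avgIdem, avgIdem, map_smul, map_sum, Fintype.card_congr e.toEquiv]
  congr 1
  exact Fintype.sum_equiv e.toEquiv _ _ fun s => by simp [e, MonoidAlgebra.of_apply]

theorem commute_of_avgIdem_of_mem_normalizer {S : Subgroup G} {g : G}
    (hg : g ∈ Subgroup.normalizer (S : Set G)) : Commute (δ g) (avgIdem G S) := by
  have h := mapDomainAlgHom_avgIdem S (f := (MulAut.conj g : G →* G)) (MulAut.conj g).injective
  rw [Subgroup.mem_normalizer_iff_map_conj_eq.1 hg, mapDomainAlgHom_conj] at h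
  calc δ g * avgIdem G S = δ g * avgIdem G S * δ g⁻¹ * δ g := by
        rw [mul_assoc _ (δ g⁻¹), ← map_mul, inv_mul_cancel, map_one, mul_one]
    _ = avgIdem G S * δ g := by rw [h]

theorem commute_avgIdem_avgIdem_of_le_normalizer {S T : Subgroup G}
    (h : T ≤ Subgroup.normalizer (S : Set G)) : Commute (avgIdem G T) (avgIdem G S) :=
  (Commute.sum_left _ _ _ fun t _ => commute_of_avgIdem_of_mem_normalizer (h t.2)).smul_left _

theorem isGelfandPair_iff {S : Subgroup G} : IsGelfandPair G S ↔ ∀ x y,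
    avgIdem G S * x * avgIdem G S * y * avgIdem G S =
      avgIdem G S * y * avgIdem G S * x * avgIdem G S := by
  have h (x y : MonoidAlgebra ℂ G) :
      avgIdem G S * x * avgIdem G S * (avgIdem G S * y * avgIdem G S) =
        avgIdem G S * x * avgIdem G S * y * avgIdem G S := by
    simp only [← mul_assoc]
    rw [mul_assoc (avgIdem G S * x), (isIdempotentElem_avgIdem S).eq]
  simp only [IsGelfandPair, h]

theorem isGelfandPair_iff_of {S : Subgroup G} : IsGelfandPair G S ↔ ∀ g g' : G,
    avgIdem G S * δ g * avgIdem G S * δ g' * avgIdem G S =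
      avgIdem G S * δ g' * avgIdem G S * δ g * avgIdem G S := by
  refine isGelfandPair_iff.trans ⟨fun h g g' => h _ _, fun h x y => ?_⟩
  induction x using MonoidAlgebra.induction_on with
  | of g =>
    induction y using MonoidAlgebra.induction_on with
    | of g' => exact h g g'
    | add y y' hy hy' => simp only [mul_add, add_mul, hy, hy']
    | smul c y hy => simp only [mul_smul_comm, smul_mul_assoc, hy]
  | add x x' hx hx' => simp only [mul_add, add_mul, hx, hx']
  | smul c x hx => simp only [mul_smul_comm, smul_mul_assoc, hx]

theorem IsGelfandPair.map {G' : Type} [Group G'] [Fintype G'] {S : Subgroup G}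
    (h : IsGelfandPair G S) {f : G →* G'} (hf : Injective f) (x y : G) :
    avgIdem G' (S.map f) * δ (f x) * avgIdem G' (S.map f) * δ (f y) * avgIdem G' (S.map f) =
      avgIdem G' (S.map f) * δ (f y) * avgIdem G' (S.map f) * δ (f x) *
        avgIdem G' (S.map f) := by
  have := congrArg (mapDomainAlgHom ℂ ℂ f) (isGelfandPair_iff_of.1 h x y)
  simpa only [map_mul, mapDomainAlgHom_avgIdem S hf, mapDomainAlgHom_of] using this

theorem avgIdem_mul_mul_avgIdem_eq_sum {A B S : Subgroup G}
    (hAB : avgIdem G A * avgIdem G B = avgIdem G S) (hB : B ≤ S) (x : MonoidAlgebra ℂ G)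
    (y : G) :
    avgIdem G S * x * avgIdem G S * δ y * avgIdem G S = (Fintype.card B : ℂ)⁻¹ •
      ∑ β : B, avgIdem G S * x * avgIdem G A * δ (β * y * (β : G)⁻¹) * avgIdem G S := by
  have hconj (β : B) :
      δ (β : G) * δ y * avgIdem G S = δ (β * y * (β : G)⁻¹) * avgIdem G S := by
    rw [map_mul, map_mul, mul_assoc (δ (β : G) * δ y), of_mul_avgIdem (hB (inv_mem β.2))]
  calc avgIdem G S * x * avgIdem G S * δ y * avgIdem G S
      = avgIdem G S * x * avgIdem G A * (avgIdem G B * δ y * avgIdem G S) := by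
        rw [← hAB]; simp only [mul_assoc]
    _ = _ := by
        rw [avgIdem.eq_1 G B, smul_mul_assoc, smul_mul_assoc, Finset.sum_mul, Finset.sum_mul,
          mul_smul_comm, Finset.mul_sum]
        simp only [hconj, mul_assoc]

theorem avgIdem_mul_mul_comm_of_le {A S : Subgroup G} (hAS : A ≤ S) {x z : MonoidAlgebra ℂ G}
    (h : avgIdem G A * x * avgIdem G A * z * avgIdem G A =
      avgIdem G A * z * avgIdem G A * x * avgIdem G A) :
    avgIdem G S * x * avgIdem G A * z * avgIdem G S =
      avgIdem G S * z * avgIdem G A * x * avgIdem G S := by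
  have hl := avgIdem_mul_avgIdem_of_le_right hAS
  have hr := avgIdem_mul_avgIdem_of_le_left hAS
  calc avgIdem G S * x * avgIdem G A * z * avgIdem G S
      = avgIdem G S * avgIdem G A * x * avgIdem G A * z * (avgIdem G A * avgIdem G S) := by
        rw [hl, hr]
    _ = avgIdem G S * (avgIdem G A * x * avgIdem G A * z * avgIdem G A) * avgIdem G S := by
        simp only [mul_assoc]
    _ = avgIdem G S * avgIdem G A * z * avgIdem G A * x * (avgIdem G A * avgIdem G S) := by
        rw [h]; simp only [mul_assoc]
    _ = avgIdem G S * z * avgIdem G A * x * avgIdem G S := by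
        rw [hl, hr]

theorem avgIdem_mul_of_conj_mul {A S : Subgroup G} {β : G} (hβS : β ∈ S)
    (hβA : β ∈ Subgroup.normalizer (A : Set G)) (y u : G) :
    avgIdem G S * δ (β * y * β⁻¹) * avgIdem G A * δ u * avgIdem G S =
      avgIdem G S * δ y * avgIdem G A * δ (β⁻¹ * u * β) * avgIdem G S := by
  simp only [map_mul, ← mul_assoc]
  rw [avgIdem_mul_of hβS, mul_assoc _ (δ β), of_mul_avgIdem hβS,
    mul_assoc _ (δ β⁻¹), (commute_of_avgIdem_of_mem_normalizer (inv_mem hβA)).eq]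
  simp only [mul_assoc]

end Hecke

namespace SemidirectProduct

variable {N P : Type} [Group N] [Group P] {φ : P →* MulAut N}

theorem disjoint_map_inl_range_inr (M : Subgroup N) :
    Disjoint (M.map inl) (inr : P →* N ⋊[φ] P).range := by
  rw [Subgroup.disjoint_def]
  rintro _ ⟨m, -, rfl⟩ ⟨p, hp⟩
  have hp1 : p = 1 := by simpa using congrArg right hp
  rw [← hp, hp1, map_one]

variable {M : Subgroup N} {S : Subgroup (N ⋊[φ] P)}

theorem inr_mem_of_left_mem_iff (hS : ∀ g, g ∈ S ↔ g.left ∈ M) (p : P) : inr p ∈ S :=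
  (hS _).2 M.one_mem

theorem map_inl_le_of_left_mem_iff (hS : ∀ g, g ∈ S ↔ g.left ∈ M) : M.map inl ≤ S := by
  rintro _ ⟨m, hm, rfl⟩
  exact (hS _).2 hm

theorem range_inr_le_normalizer_map_inl (hS : ∀ g, g ∈ S ↔ g.left ∈ M) :
    (inr : P →* N ⋊[φ] P).range ≤
      Subgroup.normalizer ((M.map inl : Subgroup (N ⋊[φ] P)) : Set (N ⋊[φ] P)) := by
  rw [Subgroup.le_normalizer_iff]
  rintro _ ⟨p, rfl⟩ _ ⟨m, hm, rfl⟩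
  refine ⟨φ p m, ?_, by rw [inl_aut, map_inv]⟩
  rw [SetLike.mem_coe, ← left_inl (φ := φ) (φ p m), ← hS, inl_aut]
  exact S.mul_mem (S.mul_mem (inr_mem_of_left_mem_iff hS p) ((hS _).2 hm))
    (inr_mem_of_left_mem_iff hS _)

theorem coe_eq_map_inl_mul_range_inr (hS : ∀ g, g ∈ S ↔ g.left ∈ M) :
    (S : Set (N ⋊[φ] P)) =
      ((M.map inl : Subgroup (N ⋊[φ] P)) : Set (N ⋊[φ] P)) * (inr : P →* N ⋊[φ] P).range := by
  ext g
  refine ⟨fun hg => ⟨inl g.left, ⟨g.left, (hS g).1 hg, rfl⟩, inr g.right, ⟨g.right, rfl⟩,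
    inl_left_mul_inr_right g⟩, ?_⟩
  rintro ⟨_, hx, _, ⟨p, rfl⟩, rfl⟩
  exact S.mul_mem (map_inl_le_of_left_mem_iff hS hx) (inr_mem_of_left_mem_iff hS p)

end SemidirectProduct

open SemidirectProduct in
theorem IsGelfandPair.semidirectProduct {N P : Type} [Group N] [Group P] [Fintype N]
    {φ : P →* MulAut N} [Fintype (N ⋊[φ] P)] {M : Subgroup N} (hM : IsGelfandPair N M)
    {S : Subgroup (N ⋊[φ] P)} (hS : ∀ g, g ∈ S ↔ g.left ∈ M) :
    IsGelfandPair (N ⋊[φ] P) S := by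
  set A := M.map (inl : N →* N ⋊[φ] P)
  set B := (inr : P →* N ⋊[φ] P).range
  have hAB : avgIdem _ A * avgIdem _ B = avgIdem _ S :=
    avgIdem_mul_avgIdem_of_disjoint (disjoint_map_inl_range_inr M)
      (coe_eq_map_inl_mul_range_inr hS)
  have hBS : B ≤ S := by rintro _ ⟨p, rfl⟩; exact inr_mem_of_left_mem_iff hS p
  have hinr (z : MonoidAlgebra ℂ (N ⋊[φ] P)) (u : N) (p : P) :
      z * δ (inl u * inr p) * avgIdem _ S = z * δ (inl u) * avgIdem _ S := by
    rw [map_mul, ← mul_assoc, mul_assoc _ (δ (inr p)),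
      of_mul_avgIdem (inr_mem_of_left_mem_iff hS p)]
  rw [isGelfandPair_iff_of]
  intro g g'
  rw [← inl_left_mul_inr_right g, ← inl_left_mul_inr_right g']
  simp only [hinr]
  rw [avgIdem_mul_mul_avgIdem_eq_sum hAB hBS, avgIdem_mul_mul_avgIdem_eq_sum hAB hBS]
  refine congrArg ((Fintype.card B : ℂ)⁻¹ • ·) ?_
  calc _ = ∑ β : B, avgIdem _ S * δ ((β : N ⋊[φ] P) * inl g'.left * (β : N ⋊[φ] P)⁻¹) *
          avgIdem _ A * δ (inl g.left) * avgIdem _ S := by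
        refine Finset.sum_congr rfl fun ⟨_, p, hp⟩ _ => ?_
        subst hp
        rw [← map_inv, ← inl_aut]
        exact avgIdem_mul_mul_comm_of_le (map_inl_le_of_left_mem_iff hS)
          (hM.map inl_injective _ _)
    _ = ∑ β : B, avgIdem _ S * δ (inl g'.left) * avgIdem _ A *
          δ ((β : N ⋊[φ] P)⁻¹ * inl g.left * (β : N ⋊[φ] P)) * avgIdem _ S :=
        Finset.sum_congr rfl fun β _ => avgIdem_mul_of_conj_mul (hBS β.2)
          (range_inr_le_normalizer_map_inl hS β.2) _ _
    _ = _ := Fintype.sum_equiv (Equiv.inv B) _ _ fun β => by simp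

namespace Pi

variable {ι : Type} [DecidableEq ι] {K : ι → Type} [∀ i, Group (K i)]

theorem commute_mulSingle_of_apply_eq_one {x : ∀ i, K i} {i : ι} (hx : x i = 1) (a : K i) :
    Commute x (mulSingle i a) := by
  funext j
  by_cases h : j = i
  · subst h; simp [hx]
  · simp [h]

theorem mulSingle_mul_update_one (x : ∀ i, K i) (i : ι) :
    mulSingle i (x i) * update x i 1 = x := by
  funext j
  by_cases h : j = i
  · subst h; simp
  · simp [h]

variable (L : ∀ i, Subgroup (K i)) (i : ι)

theorem disjoint_map_mulSingle_pi_update_bot :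
    Disjoint ((L i).map (MonoidHom.mulSingle K i)) (Subgroup.pi Set.univ (update L i ⊥)) := by
  rw [Subgroup.disjoint_def]
  rintro _ ⟨a, -, rfl⟩ ha
  have : a = 1 := by simpa using ha i trivial
  simp [this]

theorem coe_pi_eq_map_mulSingle_mul_pi_update_bot :
    (Subgroup.pi Set.univ L : Set (∀ i, K i)) =
      ((L i).map (MonoidHom.mulSingle K i) : Set (∀ i, K i)) *
        Subgroup.pi Set.univ (update L i ⊥) := by
  have hle : Subgroup.pi Set.univ (update L i ⊥) ≤ Subgroup.pi Set.univ L := by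
    intro x hx j _
    by_cases h : j = i
    · subst h
      rw [show x j = 1 by simpa using hx j trivial]
      exact (L j).one_mem
    · simpa [h] using hx j trivial
  ext x
  refine ⟨fun hx => ⟨_, ⟨x i, hx i trivial, rfl⟩, update x i 1, fun j _ => ?_,
    mulSingle_mul_update_one x i⟩, ?_⟩
  · by_cases h : j = i
    · subst h; simp
    · simpa [h] using hx j trivial
  · rintro ⟨_, ⟨a, ha, rfl⟩, y, hy, rfl⟩
    exact Subgroup.mul_mem _ ((Subgroup.mulSingle_mem_pi i a).2 fun _ => ha) (hle hy)

theorem mem_normalizer_map_mulSingle_of_apply_eq_one {x : ∀ i, K i} (hx : x i = 1) :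
    x ∈ Subgroup.normalizer ((L i).map (MonoidHom.mulSingle K i) : Set (∀ i, K i)) := by
  refine Subgroup.centralizer_le_normalizer _ ?_
  rintro _ ⟨a, -, rfl⟩
  exact (commute_mulSingle_of_apply_eq_one hx a).symm

theorem mulSingle_mem_normalizer_pi_update_bot (a : K i) :
    mulSingle i a ∈
      Subgroup.normalizer (Subgroup.pi Set.univ (update L i ⊥) : Set (∀ i, K i)) := by
  refine Subgroup.centralizer_le_normalizer _ ?_
  intro y hy
  exact commute_mulSingle_of_apply_eq_one (by simpa using hy i trivial) a

end Pi

section PiHecke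

open Pi

variable {ι : Type} [Fintype ι] [DecidableEq ι] {K : ι → Type} [∀ i, Group (K i)]
  [∀ i, Fintype (K i)]

theorem avgIdem_pi_mul_mul_eq_mul (L : ∀ i, Subgroup (K i)) (i : ι) (x y : ∀ i, K i) :
    avgIdem _ (Subgroup.pi Set.univ L) * δ x * avgIdem _ (Subgroup.pi Set.univ L) * δ y *
        avgIdem _ (Subgroup.pi Set.univ L) =
      (avgIdem _ ((L i).map (MonoidHom.mulSingle K i)) * δ (mulSingle i (x i)) *
          avgIdem _ ((L i).map (MonoidHom.mulSingle K i)) * δ (mulSingle i (y i)) *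
          avgIdem _ ((L i).map (MonoidHom.mulSingle K i))) *
        (avgIdem _ (Subgroup.pi Set.univ (update L i ⊥)) * δ (update x i 1) *
          avgIdem _ (Subgroup.pi Set.univ (update L i ⊥)) * δ (update y i 1) *
          avgIdem _ (Subgroup.pi Set.univ (update L i ⊥))) := by
  set a := avgIdem _ ((L i).map (MonoidHom.mulSingle K i))
  set d := avgIdem _ (Subgroup.pi Set.univ (update L i ⊥))
  have hda : Commute d a := commute_avgIdem_avgIdem_of_le_normalizer fun _ hh =>
    mem_normalizer_map_mulSingle_of_apply_eq_one L i (by simpa using hh i trivial)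
  have hxa : Commute (δ (update x i 1)) a := commute_of_avgIdem_of_mem_normalizer
    (mem_normalizer_map_mulSingle_of_apply_eq_one L i (update_self i 1 x))
  have hya : Commute (δ (update y i 1)) a := commute_of_avgIdem_of_mem_normalizer
    (mem_normalizer_map_mulSingle_of_apply_eq_one L i (update_self i 1 y))
  have hdX (c : K i) : Commute d (δ (mulSingle i c)) :=
    (commute_of_avgIdem_of_mem_normalizer (mulSingle_mem_normalizer_pi_update_bot L i c)).symm
  have hxY : Commute (δ (update x i 1)) (δ (mulSingle i (y i))) :=
    (commute_mulSingle_of_apply_eq_one (update_self i 1 x) _).map _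
  have hsplit (z : ∀ i, K i) : δ z = δ (mulSingle i (z i)) * δ (update z i 1) := by
    rw [← map_mul, mulSingle_mul_update_one]
  rw [← avgIdem_mul_avgIdem_of_disjoint (disjoint_map_mulSingle_pi_update_bot L i)
      (coe_pi_eq_map_mulSingle_mul_pi_update_bot L i),
    hsplit x, hsplit y,
    (hdX _).mul_mul_mul_comm, (hda.mul_left hxa).mul_mul_mul_comm,
    (((hdX _).mul_left hxY).mul_left (hdX _)).mul_mul_mul_comm,
    ((((hda.mul_left hxa).mul_left hda)).mul_left hya).mul_mul_mul_comm]

variable {L : ∀ i, Subgroup (K i)}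

theorem avgIdem_pi_mul_mul_eq_update (h : ∀ i, IsGelfandPair (K i) (L i)) (i : ι)
    (x y : ∀ i, K i) :
    avgIdem _ (Subgroup.pi Set.univ L) * δ x * avgIdem _ (Subgroup.pi Set.univ L) * δ y *
        avgIdem _ (Subgroup.pi Set.univ L) =
      avgIdem _ (Subgroup.pi Set.univ L) * δ (update x i (y i)) *
        avgIdem _ (Subgroup.pi Set.univ L) * δ (update y i (x i)) *
        avgIdem _ (Subgroup.pi Set.univ L) := by
  rw [avgIdem_pi_mul_mul_eq_mul L i, avgIdem_pi_mul_mul_eq_mul L i]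
  simp only [update_self, update_idem]
  exact congrArg (· * _)
    ((h i).map (f := MonoidHom.mulSingle K i) (mulSingle_injective i) _ _)

theorem IsGelfandPair.pi (h : ∀ i, IsGelfandPair (K i) (L i)) :
    IsGelfandPair (∀ i, K i) (Subgroup.pi Set.univ L) := by
  rw [isGelfandPair_iff_of]
  intro x y
  suffices ∀ s : Finset ι,
      avgIdem _ (Subgroup.pi Set.univ L) * δ x * avgIdem _ (Subgroup.pi Set.univ L) * δ y *
          avgIdem _ (Subgroup.pi Set.univ L) =
        avgIdem _ (Subgroup.pi Set.univ L) * δ (s.piecewise y x) *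
          avgIdem _ (Subgroup.pi Set.univ L) * δ (s.piecewise x y) *
          avgIdem _ (Subgroup.pi Set.univ L) by
    simpa using this Finset.univ
  intro s
  induction s using Finset.induction_on with
  | empty => simp
  | insert i s hi ih =>
    rw [ih, avgIdem_pi_mul_mul_eq_update h i, Finset.piecewise_insert, Finset.piecewise_insert,
      Finset.piecewise_eq_of_notMem _ _ _ hi, Finset.piecewise_eq_of_notMem _ _ _ hi]

end PiHecke

/-- If `(K, L)` is a Gelfand pair, then `(K ≀ S_n, L ≀ S_n)` is also a Gelfand pair. -/
theorem wreath_gelfand_pair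
    (K : Type) [Group K] [Fintype K] (L : Subgroup K)
    (hGP : IsGelfandPair K L) (n : ℕ) :
    IsGelfandPair (Wreath n K) (wreathSubgroup n K L) :=
  (IsGelfandPair.pi fun _ => hGP).semidirectProduct fun _ => by
    simp [wreathSubgroup, Subgroup.mem_pi]
end

section
/- Let (K,L) be a Gelfand pair with zonal spherical functions ω_0,...,ω_{s-1} (ω_0 = 1). For the Gelfand pair (K ≀ S_n, L ≀ S_n), the zonal spherical functions Ω_k, indexed by k = (k_0,...,k_{s-1}) with k_0+⋯+k_{s-1}=n, satisfy the generating identity: for x = (x_1,...,x_n;σ) ∈ K ≀ S_n, ∏_{i=1}^n (∑_{j=0}^{s-1} ω_j(x_i) t_j) = ∑_{k} (n choose k_0,...,k_{s-1}) Ω_k(x) t_0^{k_0}⋯t_{s-1}^{k_{s-1}} as polynomials in commuting variables t_0,...,t_{s-1}. -/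
open scoped BigOperators

attribute [local instance] Classical.propDecidable

/-- `ω` is a zonal spherical function of the pair `(K, L)`:
normalized, bi-`L`-invariant, and satisfying the spherical functional equation. -/
def IsZSF (K : Type) [Group K] [Fintype K] (L : Subgroup K) (ω : K → ℂ) : Prop :=
  ω 1 = 1 ∧
    (∀ g : K, ∀ h ∈ L, ∀ h' ∈ L, ω (h * g * h') = ω g) ∧
    ∀ x y : K, (Fintype.card L : ℂ)⁻¹ * ∑ h : L, ω (x * (h : K) * y) = ω x * ω y

/-- the double coset `L x₀ L` as a set -/
def dcoset (K : Type) [Group K] (L : Subgroup K) (x₀ : K) : Set K :=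
  {g : K | ∃ a ∈ L, ∃ b ∈ L, g = a * x₀ * b}

/-- one-step transition probability of the interacting urn model on `(K ⧸ L)^n` -/
noncomputable def step (K : Type) [Group K] [Fintype K] (L : Subgroup K) (x₀ : K)
    (n m : ℕ) (p : ℝ) (x y : Fin n → K ⧸ L) : ℝ :=
  if x = y then 1 - m * p
  else if ∃ j : Fin n, (∀ i : Fin n, i ≠ j → x i = y i) ∧
      (x j).out⁻¹ * (y j).out ∈ dcoset K L x₀ then p / n
  else 0

/-- the transition matrix `P_{(K,L;n)}` (real version) -/
noncomputable def PmatR (K : Type) [Group K] [Fintype K] (L : Subgroup K) (x₀ : K)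
    (n m : ℕ) (p : ℝ) : Matrix (Fin n → K ⧸ L) (Fin n → K ⧸ L) ℝ :=
  Matrix.of fun x y => step K L x₀ n m p x y

/-- the transition matrix `P_{(K,L;n)}` (complex version) -/
noncomputable def PmatC (K : Type) [Group K] [Fintype K] (L : Subgroup K) (x₀ : K)
    (n m : ℕ) (p : ℝ) : Matrix (Fin n → K ⧸ L) (Fin n → K ⧸ L) ℂ :=
  Matrix.of fun x y => (step K L x₀ n m p x y : ℂ)

/-- the initial state `ē = (L, …, L)` -/
def eQ (K : Type) [Group K] (L : Subgroup K) (n : ℕ) : Fin n → K ⧸ L :=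
  fun _ => ((1 : K) : K ⧸ L)

/-- The generating identity defining the multivariate Krawtchouk polynomials `Ω_k`:
`∏_{i=1}^n (∑_j ω_j(x_i) t_j) = ∑_{k ∈ X(s,n)} (n choose k) Ω_k(x) t^k`,
stated coefficientwise. -/
def GenId (K : Type) [Group K] (s n : ℕ) (ω : Fin s → K → ℂ)
    (Ω : (Fin s → ℕ) → (Fin n → K) → ℂ) : Prop :=
  ∀ (x : Fin n → K) (k : Fin s → ℕ), (∑ i, k i = n) →
    MvPolynomial.coeff (Finsupp.equivFunOnFinite.symm k)
        (∏ i : Fin n, ∑ j : Fin s, MvPolynomial.C (ω j (x i)) * MvPolynomial.X j) =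
      (Nat.multinomial Finset.univ k : ℂ) * Ω k x

/-!
Expanding the product, the coefficient of `t^k` is the sum, over the words `f : Fin n → Fin s`
of content `k`, of `∏ᵢ ω_{f i}(xᵢ)`; so `Ω_k` is that sum divided by `(n choose k)`. Each summand
is a zonal spherical function of `(Kⁿ, Lⁿ)`, and `Sₙ` permutes the words of content `k`
transitively. Averaging over `L ≀ Sₙ` therefore splits into an `Lⁿ`-average, done factor by
factor, and an `Sₙ`-average, which turns a single word into the whole content class up to the
factor `n! / (n choose k)`.
-/

open Finset

section Content

variable {α β : Type*} [Fintype α] [DecidableEq β]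

noncomputable def content (f : α → β) (j : β) : ℕ := #{i | f i = j}

noncomputable def wordsWithContent [Fintype β] (k : β → ℕ) : Finset (α → β) := {f | content f = k}

@[simp]
lemma mem_wordsWithContent [Fintype β] {k : β → ℕ} {f : α → β} :
    f ∈ wordsWithContent k ↔ content f = k := by
  simp [wordsWithContent]

@[simp]
lemma content_comp_perm (f : α → β) (σ : Equiv.Perm α) : content (f ∘ σ) = content f := by
  funext j
  exact card_bij' (fun i _ => σ i) (fun i _ => σ.symm i) (by simp) (by simp) (by simp) (by simp)

lemma exists_perm_comp_eq_of_content_eq [DecidableEq α] {f g : α → β}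
    (h : content f = content g) : ∃ σ : Equiv.Perm α, f ∘ σ = g := by
  have hcard : ∀ j, Fintype.card {i // g i = j} = Fintype.card {i // f i = j} := fun j => by
    rw [Fintype.card_subtype, Fintype.card_subtype]
    exact (congrFun h j).symm
  exact ⟨Equiv.ofFiberEquiv fun j => Fintype.equivOfCardEq (hcard j),
    funext (Equiv.ofFiberEquiv_map _)⟩

lemma sum_comp_perm_wordsWithContent [Fintype β] {M : Type*} [AddCommMonoid M]
    (k : β → ℕ) (σ : Equiv.Perm α) (F : (α → β) → M) :
    ∑ f ∈ wordsWithContent k, F (f ∘ σ) = ∑ f ∈ wordsWithContent k, F f :=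
  sum_nbij' (fun f : α → β => f ∘ σ) (fun f => f ∘ σ.symm) (by simp) (by simp)
    (fun f _ => by ext; simp) (fun f _ => by ext; simp) (fun _ _ => rfl)

/-- The words of a given content form a single `Sₙ`-orbit. -/
lemma card_smul_sum_perm_comp [DecidableEq α] [Fintype β] {M : Type*} [AddCommMonoid M]
    (f : α → β) (F : (α → β) → M) :
    #(wordsWithContent (α := α) (content f)) • ∑ σ : Equiv.Perm α, F (f ∘ σ) =
      (Fintype.card α).factorial • ∑ g ∈ wordsWithContent (content f), F g := by
  have horbit : ∀ g ∈ wordsWithContent (content f),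
      ∑ σ : Equiv.Perm α, F (g ∘ σ) = ∑ σ : Equiv.Perm α, F (f ∘ σ) := by
    intro g hg
    obtain ⟨τ, rfl⟩ := exists_perm_comp_eq_of_content_eq (mem_wordsWithContent.mp hg).symm
    exact Fintype.sum_equiv (Equiv.mulLeft τ) _ _ fun σ => rfl
  calc #(wordsWithContent (α := α) (content f)) • ∑ σ : Equiv.Perm α, F (f ∘ σ)
      = ∑ g ∈ wordsWithContent (content f), ∑ σ : Equiv.Perm α, F (g ∘ σ) := by
        rw [sum_congr rfl horbit, sum_const]
    _ = ∑ σ : Equiv.Perm α, ∑ g ∈ wordsWithContent (content f), F g := by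
        rw [sum_comm]
        exact sum_congr rfl fun σ _ => sum_comp_perm_wordsWithContent _ σ F
    _ = (Fintype.card α).factorial • ∑ g ∈ wordsWithContent (content f), F g := by
        rw [sum_const, card_univ, Fintype.card_perm]

end Content

section Coefficients

open MvPolynomial

variable {n s : ℕ}

lemma coeff_prod_sum_C_mul_X {R : Type*} [CommSemiring R] (c : Fin n → Fin s → R)
    (k : Fin s → ℕ) :
    coeff (Finsupp.equivFunOnFinite.symm k) (∏ i, ∑ j, C (c i j) * X j) =
      ∑ f ∈ wordsWithContent k, ∏ i, c i (f i) := by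
  have hmonomial : ∀ f : Fin n → Fin s, ∏ i, C (c i (f i)) * X (f i) =
      monomial (∑ i, Finsupp.single (f i) 1) (∏ i, c i (f i)) := fun f => by
    simp only [monomial_sum_prod, ← C_mul_X_pow_eq_monomial, pow_one]
  have hexp : ∀ f : Fin n → Fin s,
      ∑ i, Finsupp.single (f i) 1 = Finsupp.equivFunOnFinite.symm (content f) := fun f => by
    ext j
    rw [Finsupp.coe_equivFunOnFinite_symm, content, card_filter, Finsupp.finsetSum_apply]
    simp only [Finsupp.single_apply]
  simp only [Fintype.prod_sum, hmonomial, hexp, coeff_sum, coeff_monomial,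
    (Finsupp.equivFunOnFinite.symm.injective).eq_iff, ← sum_filter]
  exact sum_congr (by ext; simp) fun _ _ => rfl

lemma card_wordsWithContent {k : Fin s → ℕ} (hk : ∑ j, k j = n) :
    #(wordsWithContent (α := Fin n) k) = Nat.multinomial univ k := by
  have h := coeff_prod_sum_C_mul_X (R := ℕ) (fun (_ : Fin n) (_ : Fin s) => 1) k
  simp only [map_one, one_mul, prod_const_one, sum_const, smul_eq_mul, mul_one, prod_const,
    card_univ, Fintype.card_fin, coeff_sum_X_pow_of_fintype] at h
  rw [← h, Finsupp.sum_fintype _ _ (fun _ => rfl), if_pos (by simpa using hk)]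
  simp [Finsupp.multinomial_eq_of_support_subset (subset_univ _)]

end Coefficients

namespace IsZSF

variable {K : Type} [Group K] [Fintype K] {L : Subgroup K} {φ : K → ℂ}

lemma sum_mul_mul (hφ : IsZSF K L φ) (x y : K) :
    ∑ h : L, φ (x * h * y) = Fintype.card L * (φ x * φ y) := by
  rw [← hφ.2.2, mul_inv_cancel_left₀ (Nat.cast_ne_zero.mpr Fintype.card_ne_zero)]

/-- Products of zonal spherical functions are zonal spherical for `(Kⁿ, Lⁿ)`. -/
lemma sum_pi_prod {ι : Type*} [Fintype ι] [DecidableEq ι] {φ : ι → K → ℂ}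
    (hφ : ∀ i, IsZSF K L (φ i)) (x y : ι → K) :
    ∑ a : ι → L, ∏ i, φ i (x i * a i * y i) =
      (Fintype.card L : ℂ) ^ Fintype.card ι * ∏ i, (φ i (x i) * φ i (y i)) := by
  rw [← card_univ (α := ι), ← prod_const, ← prod_mul_distrib]
  refine (Fintype.prod_sum fun i (h : L) => φ i (x i * h * y i)).symm.trans ?_
  exact prod_congr rfl fun i _ => (hφ i).sum_mul_mul (x i) (y i)

end IsZSF

section Wreath

variable {n : ℕ} {K : Type} [Group K]

lemma Wreath.mul_mul_left (x w y : Wreath n K) (i : Fin n) :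
    (x * w * y).left i =
      x.left i * w.left (x.right⁻¹ i) * y.left (w.right⁻¹ (x.right⁻¹ i)) :=
  rfl

def wreathSubgroupEquiv (L : Subgroup K) :
    ((Fin n → L) × Equiv.Perm (Fin n)) ≃ wreathSubgroup n K L where
  toFun p := ⟨⟨fun i => p.1 i, p.2⟩, fun i => (p.1 i).2⟩
  invFun w := (fun i => ⟨(w : Wreath n K).left i, w.2 i⟩, (w : Wreath n K).right)
  left_inv _ := rfl
  right_inv _ := rfl

lemma card_wreathSubgroup [Fintype K] (L : Subgroup K) :
    Fintype.card (wreathSubgroup n K L) = Fintype.card L ^ n * n.factorial := by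
  simp [← Fintype.card_congr (wreathSubgroupEquiv L), Fintype.card_perm]

lemma sum_wreathSubgroup_mul_mul_left [Fintype K] (L : Subgroup K) {M : Type*}
    [AddCommMonoid M] (F : (Fin n → K) → M) (x y : Wreath n K) :
    ∑ h : wreathSubgroup n K L, F (x * h * y).left =
      ∑ σ : Equiv.Perm (Fin n), ∑ a : Fin n → L, F fun i => x.left i * a i * y.left (σ⁻¹ i) := by
  rw [← (wreathSubgroupEquiv L).sum_comp, Fintype.sum_prod_type, sum_comm,
    ← Equiv.sum_comp (Equiv.mulLeft x.right⁻¹)]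
  refine sum_congr rfl fun τ _ => ?_
  rw [← (Equiv.arrowCongr x.right.symm (Equiv.refl L)).sum_comp]
  refine sum_congr rfl fun a _ => congrArg F ?_
  funext i
  simp [Wreath.mul_mul_left, wreathSubgroupEquiv, Equiv.arrowCongr]

end Wreath

section Krawtchouk

variable {n s : ℕ} {α : Type*}

noncomputable def contentSum (ω : Fin s → α → ℂ) (k : Fin s → ℕ) (x : Fin n → α) : ℂ :=
  ∑ f ∈ wordsWithContent k, ∏ i, ω (f i) (x i)

/-- The multivariate Krawtchouk polynomial `Ω_k`. -/
noncomputable def krawtchouk (ω : Fin s → α → ℂ) (k : Fin s → ℕ) (x : Fin n → α) : ℂ :=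
  (Nat.multinomial univ k : ℂ)⁻¹ * contentSum ω k x

lemma multinomial_cast_ne_zero (k : Fin s → ℕ) : (Nat.multinomial univ k : ℂ) ≠ 0 :=
  Nat.cast_ne_zero.mpr (Nat.multinomial_pos _ _).ne'

lemma genId_krawtchouk {K : Type} [Group K] (ω : Fin s → K → ℂ) :
    GenId K s n ω (krawtchouk ω) := fun x k _ => by
  rw [coeff_prod_sum_C_mul_X, krawtchouk, contentSum,
    mul_inv_cancel_left₀ (multinomial_cast_ne_zero k)]

lemma contentSum_comp_perm (ω : Fin s → α → ℂ) (k : Fin s → ℕ) (x : Fin n → α)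
    (σ : Equiv.Perm (Fin n)) : contentSum ω k (x ∘ σ) = contentSum ω k x := by
  rw [contentSum, ← sum_comp_perm_wordsWithContent k σ]
  exact sum_congr rfl fun f _ => Fintype.prod_equiv σ _ _ fun i => rfl

lemma contentSum_congr {ω : Fin s → α → ℂ} {x y : Fin n → α} (h : ∀ j i, ω j (x i) = ω j (y i))
    (k : Fin s → ℕ) : contentSum ω k x = contentSum ω k y :=
  sum_congr rfl fun f _ => prod_congr rfl fun i _ => h (f i) i

lemma contentSum_const_of_forall_eq_one {a : α} (ω : Fin s → α → ℂ) (hω : ∀ j, ω j a = 1)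
    {k : Fin s → ℕ} (hk : ∑ j, k j = n) :
    contentSum ω k (fun _ : Fin n => a) = Nat.multinomial univ k := by
  simp [contentSum, hω, card_wordsWithContent hk]

variable {K : Type} [Group K] [Fintype K] {L : Subgroup K} {ω : Fin s → K → ℂ}

lemma sum_wreathSubgroup_contentSum (hω : ∀ j, IsZSF K L (ω j)) {k : Fin s → ℕ}
    (hk : ∑ j, k j = n) (x y : Wreath n K) :
    (∑ h : wreathSubgroup n K L, contentSum ω k (x * h * y).left) * Nat.multinomial univ k =
      Fintype.card (wreathSubgroup n K L) *
        (contentSum ω k x.left * contentSum ω k y.left) := by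
  have hperm : ∀ f ∈ wordsWithContent (α := Fin n) k,
      (∑ σ : Equiv.Perm (Fin n), ∏ i, ω (f (σ i)) (y.left i)) * Nat.multinomial univ k =
        n.factorial * contentSum ω k y.left := by
    intro f hf
    rw [mem_wordsWithContent] at hf
    have h := card_smul_sum_perm_comp f fun g => ∏ i, ω (g i) (y.left i)
    rw [hf, card_wordsWithContent hk, Fintype.card_fin, nsmul_eq_mul, nsmul_eq_mul] at h
    rw [mul_comm, contentSum]
    exact h
  calc (∑ h : wreathSubgroup n K L, contentSum ω k (x * h * y).left) * Nat.multinomial univ k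
      = (∑ σ : Equiv.Perm (Fin n), ∑ f ∈ wordsWithContent k, ∑ a : Fin n → L,
          ∏ i, ω (f i) (x.left i * a i * y.left (σ⁻¹ i))) * Nat.multinomial univ k := by
        rw [sum_wreathSubgroup_mul_mul_left L]
        simp only [contentSum]
        rw [sum_congr rfl fun σ _ => sum_comm]
    _ = (∑ σ : Equiv.Perm (Fin n), ∑ f ∈ wordsWithContent k, Fintype.card L ^ n *
          ((∏ i, ω (f i) (x.left i)) * ∏ i, ω (f (σ i)) (y.left i))) * Nat.multinomial univ k := by
        congr 1
        refine sum_congr rfl fun σ _ => sum_congr rfl fun f _ => ?_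
        rw [IsZSF.sum_pi_prod (fun i => hω (f i)), Fintype.card_fin, prod_mul_distrib,
          Fintype.prod_equiv σ (fun i => ω (f (σ i)) (y.left i))
            (fun i => ω (f i) (y.left (σ⁻¹ i))) (fun i => by simp)]
    _ = Fintype.card L ^ n * ∑ f ∈ wordsWithContent k, (∏ i, ω (f i) (x.left i)) *
          ((∑ σ : Equiv.Perm (Fin n), ∏ i, ω (f (σ i)) (y.left i)) *
            Nat.multinomial univ k) := by
        rw [sum_comm, sum_mul, mul_sum]
        refine sum_congr rfl fun f _ => ?_
        rw [← mul_sum, ← mul_sum]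
        ring
    _ = Fintype.card (wreathSubgroup n K L) *
          (contentSum ω k x.left * contentSum ω k y.left) := by
        rw [sum_congr rfl fun f hf => by rw [hperm f hf], card_wreathSubgroup]
        simp only [contentSum]
        rw [← sum_mul]
        push_cast
        ring

theorem isZSF_krawtchouk (hω : ∀ j, IsZSF K L (ω j)) {k : Fin s → ℕ} (hk : ∑ j, k j = n) :
    IsZSF (Wreath n K) (wreathSubgroup n K L) fun w => krawtchouk ω k w.left := by
  have hM := multinomial_cast_ne_zero k
  refine ⟨?_, fun g h hh h' hh' => ?_, fun x y => ?_⟩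
  · dsimp only
    rw [krawtchouk, SemidirectProduct.one_left, Pi.one_def,
      contentSum_const_of_forall_eq_one ω (fun j => (hω j).1) hk, inv_mul_cancel₀ hM]
  · have hinv : ∀ j i, ω j ((h * g * h').left i) = ω j ((g.left ∘ ⇑h.right⁻¹) i) :=
      fun j i => (hω j).2.1 _ _ (hh i) _ (hh' _)
    dsimp only
    rw [krawtchouk, contentSum_congr hinv, contentSum_comp_perm, krawtchouk]
  · have hcard : (Fintype.card (wreathSubgroup n K L) : ℂ) ≠ 0 :=
      Nat.cast_ne_zero.mpr Fintype.card_ne_zero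
    have h := sum_wreathSubgroup_contentSum hω hk x y
    simp only [krawtchouk, ← mul_sum]
    field_simp
    linear_combination h

end Krawtchouk

theorem wreath_zsf_generating_identity_general
    (K : Type) [Group K] [Fintype K] (L : Subgroup K)
    (s : ℕ)
    (ω : Fin s → K → ℂ)
    (hzsf : ∀ i, IsZSF K L (ω i))
    (n : ℕ) :
    ∃ Ω : (Fin s → ℕ) → (Fin n → K) → ℂ,
      GenId K s n ω Ω ∧
        ∀ k : Fin s → ℕ, (∑ i, k i = n) →
          IsZSF (Wreath n K) (wreathSubgroup n K L) (fun w => Ω k w.left) :=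
  ⟨krawtchouk ω, genId_krawtchouk ω, fun _ hk => isZSF_krawtchouk hzsf hk⟩

/-- For a Gelfand pair `(K, L)`, the zonal spherical functions `Ω_k` of the wreath-product
Gelfand pair `(K ≀ S_n, L ≀ S_n)`, indexed by `k ∈ X(s,n)`, are given by the generating
identity `∏_i (∑_j ω_j(x_i) t_j) = ∑_k (n choose k) Ω_k(x) t^k`. -/
theorem wreath_zsf_generating_identity
    (K : Type) [Group K] [Fintype K] (L : Subgroup K)
    (hGP : IsGelfandPair K L)
    (s : ℕ) [NeZero s] (hs : 2 ≤ s)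
    (ω : Fin s → K → ℂ)
    (hzsf : ∀ i, IsZSF K L (ω i))
    (hω0 : ∀ g : K, ω 0 g = 1)
    (hinj : Function.Injective ω)
    (hcomplete : s = Nat.card (DoubleCoset.Quotient (L : Set K) (L : Set K)))
    (n : ℕ) (hn : 0 < n) :
    ∃ Ω : (Fin s → ℕ) → (Fin n → K) → ℂ,
      GenId K s n ω Ω ∧
        ∀ k : Fin s → ℕ, (∑ i, k i = n) →
          IsZSF (Wreath n K) (wreathSubgroup n K L) (fun w => Ω k w.left) :=
  wreath_zsf_generating_identity_general K L s ω hzsf n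
end

section
/- In the setting of the wreath product Gelfand pair (K ≀ S_n, L ≀ S_n), for x ∈ L^j × D_0 × L^{n−j−1} (that is, all coordinates in L except one lying in the double coset D_0 = Lx_0L), the zonal spherical function Ω_k evaluated at x equals ∑_{i=0}^{s-1} (k_i/n)·ω_i(x_0). -/
open scoped BigOperators

attribute [local instance] Classical.propDecidable

/-! At `x` the `j`-th factor of the generating product is `∑ ω_l(x₀) X_l` and every other
factor is `S = ∑ X_l`, because a spherical function is constant on double cosets and equals `1`
on `L`. Since `n X_i S^(n-1) = X_i ∂_i S^n` and the Euler operator `X_i ∂_i` multiplies the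
coefficient of `t^k` by `k_i`, the coefficient of `t^k` is `(∑ k_l ω_l(x₀)) / n` times that of
`S^n`, which is `(n choose k)`. -/

namespace MvPolynomial

variable {R σ : Type*} [CommSemiring R]

theorem coeff_X_mul_pderiv (i : σ) (p : MvPolynomial σ R) (d : σ →₀ ℕ) :
    coeff d (X i * pderiv i p) = d i * coeff d p := by
  induction p using MvPolynomial.induction_on' with
  | monomial m r =>
    rw [X_mul_pderiv_monomial, coeff_smul, coeff_monomial]
    split_ifs with h
    · rw [h, nsmul_eq_mul]
    · simp
  | add p q hp hq => rw [map_add, mul_add, coeff_add, hp, hq, coeff_add, mul_add]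

theorem pderiv_sum_X [Fintype σ] (i : σ) : pderiv i (∑ j, X j : MvPolynomial σ R) = 1 := by
  simp [map_sum]

theorem coeff_sum_C_mul_X_mul_sum_X_pow [Fintype σ] (c : σ → R) (d : σ →₀ ℕ) (n : ℕ) :
    (n + 1) * coeff d ((∑ i, C (c i) * X i) * (∑ i, X i) ^ n) =
      (∑ i, c i * d i) * coeff d ((∑ i, X i) ^ (n + 1)) := by
  have hX (i : σ) : X i * pderiv i ((∑ j, X j : MvPolynomial σ R) ^ (n + 1)) =
      C ((n : R) + 1) * (X i * (∑ j, X j) ^ n) := by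
    rw [pderiv_pow, pderiv_sum_X]; simp; ring
  calc (n + 1) * coeff d ((∑ i, C (c i) * X i) * (∑ i, X i) ^ n)
      = ∑ i, c i * coeff d (X i * pderiv i ((∑ j, X j) ^ (n + 1))) := by
        simp only [hX, Finset.sum_mul, coeff_sum, Finset.mul_sum, mul_assoc, coeff_C_mul]
        exact Finset.sum_congr rfl fun i _ => by ring
    _ = (∑ i, c i * d i) * coeff d ((∑ i, X i) ^ (n + 1)) := by
        simp only [coeff_X_mul_pderiv, Finset.sum_mul, mul_assoc]

theorem coeff_equivFunOnFinite_symm_sum_X_pow [Fintype σ] (k : σ → ℕ) {n : ℕ}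
    (hk : ∑ i, k i = n) :
    coeff (Finsupp.equivFunOnFinite.symm k) ((∑ i, X i : MvPolynomial σ R) ^ n) =
      Nat.multinomial Finset.univ k := by
  rw [coeff_sum_X_pow_of_fintype, Finsupp.sum_fintype _ _ fun _ => rfl,
    Finsupp.multinomial_eq_of_support_subset (Finset.subset_univ _)]
  simp [hk]

end MvPolynomial

namespace IsZSF

variable {K : Type} [Group K] [Fintype K] {L : Subgroup K} {ω : K → ℂ}

theorem apply_eq_one_of_mem (hω : IsZSF K L ω) {h : K} (hh : h ∈ L) : ω h = 1 := by
  simpa [hω.1] using hω.2.1 1 h hh 1 L.one_mem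

theorem apply_eq_of_mem_dcoset (hω : IsZSF K L ω) {x₀ g : K} (hg : g ∈ dcoset K L x₀) :
    ω g = ω x₀ := by
  obtain ⟨a, ha, b, hb, rfl⟩ := hg
  exact hω.2.1 x₀ a ha b hb

end IsZSF

open MvPolynomial

theorem prod_sum_C_mul_X_of_mem_dcoset {K : Type} [Group K] [Fintype K] {L : Subgroup K}
    {s m : ℕ} {ω : Fin s → K → ℂ} (hzsf : ∀ l, IsZSF K L (ω l)) {x₀ : K}
    {x : Fin (m + 1) → K} {j : Fin (m + 1)}
    (hxj : x j ∈ dcoset K L x₀) (hx : ∀ i, i ≠ j → x i ∈ L) :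
    ∏ i, ∑ l, C (ω l (x i)) * X l =
      (∑ l, C (ω l x₀) * X l) * (∑ l, X l : MvPolynomial (Fin s) ℂ) ^ m := by
  have hfactor (i : Fin (m + 1)) (hi : i ≠ j) :
      ∑ l, C (ω l (x i)) * X l = (∑ l, X l : MvPolynomial (Fin s) ℂ) := by
    simp [(hzsf _).apply_eq_one_of_mem (hx i hi)]
  rw [← Finset.mul_prod_erase _ _ (Finset.mem_univ j),
    Finset.prod_congr rfl fun i hi => hfactor i (Finset.ne_of_mem_erase hi)]
  simp [(hzsf _).apply_eq_of_mem_dcoset hxj]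

theorem zsf_value_on_one_dcoset_coordinate_general
    (K : Type) [Group K] [Fintype K] (L : Subgroup K)
    (s : ℕ)
    (ω : Fin s → K → ℂ)
    (hzsf : ∀ i, IsZSF K L (ω i))
    (x₀ : K)
    (n : ℕ)
    (Ω : (Fin s → ℕ) → (Fin n → K) → ℂ)
    (hGen : GenId K s n ω Ω)
    (x : Fin n → K) (j : Fin n)
    (hxj : x j ∈ dcoset K L x₀) (hx : ∀ i : Fin n, i ≠ j → x i ∈ L)
    (k : Fin s → ℕ) (hk : ∑ i, k i = n) :
    Ω k x = ∑ i : Fin s, ((k i : ℂ) / n) * ω i x₀ := by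
  obtain ⟨m, rfl⟩ : ∃ m, n = m + 1 := Nat.exists_eq_add_one.mpr j.pos
  have key := coeff_sum_C_mul_X_mul_sum_X_pow (fun l => ω l x₀) (Finsupp.equivFunOnFinite.symm k) m
  rw [← prod_sum_C_mul_X_of_mem_dcoset hzsf hxj hx, hGen x k hk,
    coeff_equivFunOnFinite_symm_sum_X_pow k hk] at key
  simp only [Finsupp.coe_equivFunOnFinite_symm] at key
  have hmult : (Nat.multinomial Finset.univ k : ℂ) ≠ 0 :=
    Nat.cast_ne_zero.mpr (Nat.multinomial_pos _ _).ne'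
  have hΩ : Ω k x * (m + 1) = ∑ l, ω l x₀ * k l :=
    mul_left_cancel₀ hmult (by linear_combination key)
  calc Ω k x = (∑ l, ω l x₀ * k l) / (m + 1) := by
        rw [← hΩ, mul_div_cancel_right₀ _ (Nat.cast_add_one_ne_zero m)]
    _ = ∑ l, ((k l : ℂ) / (m + 1 : ℕ)) * ω l x₀ := by
        rw [Finset.sum_div]; push_cast; exact Finset.sum_congr rfl fun l _ => by ring

/-- Value of the wreath-product zonal spherical function `Ω_k` at an element all of whose
coordinates lie in `L` except one lying in the double coset `D₀ = L x₀ L`: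
`Ω_k(x) = ∑_i (k_i/n) ω_i(x₀)`. -/
theorem zsf_value_on_one_dcoset_coordinate
    (K : Type) [Group K] [Fintype K] (L : Subgroup K)
    (hGP : IsGelfandPair K L)
    (s : ℕ) [NeZero s] (hs : 2 ≤ s)
    (ω : Fin s → K → ℂ)
    (hzsf : ∀ i, IsZSF K L (ω i))
    (hω0 : ∀ g : K, ω 0 g = 1)
    (hinj : Function.Injective ω)
    (hcomplete : s = Nat.card (DoubleCoset.Quotient (L : Set K) (L : Set K)))
    (x₀ : K) (hx₀ : x₀ ∉ L)
    (n : ℕ) (hn : 0 < n)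
    (Ω : (Fin s → ℕ) → (Fin n → K) → ℂ)
    (hGen : GenId K s n ω Ω)
    (hΩ : ∀ k : Fin s → ℕ, (∑ i, k i = n) →
      IsZSF (Wreath n K) (wreathSubgroup n K L) (fun w => Ω k w.left))
    (x : Fin n → K) (j : Fin n)
    (hxj : x j ∈ dcoset K L x₀) (hx : ∀ i : Fin n, i ≠ j → x i ∈ L)
    (k : Fin s → ℕ) (hk : ∑ i, k i = n) :
    Ω k x = ∑ i : Fin s, ((k i : ℂ) / n) * ω i x₀ :=
  zsf_value_on_one_dcoset_coordinate_general K L s ω hzsf x₀ n Ω hGen x j hxj hx k hk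
end

section
/- The N-step distribution of the urn model started at ē satisfies ν_N(ḡ) = r^{-n} ∑_{k ∈ X(s,n)} d_k f(k)^N Ω_k(g), where d_k = d_0^{k_0}⋯d_{s-1}^{k_{s-1}}·(n choose k_0,...,k_{s-1}) is the dimension of the irreducible representation associated to Ω_k, r = |K|/|L|, and f(k) is the Fourier coefficient of the step distribution. -/
open scoped BigOperators

attribute [local instance] Classical.propDecidable

/-!
The functions `w ↦ Ω k w.left` are zonal spherical functions of `(K ≀ S_n, L ≀ S_n)`, hence
eigenfunctions of every `K ≀ S_n`-invariant kernel on `(K ⧸ L)^n`. The urn transition matrix,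
lifted to `K ≀ S_n`, is such a kernel, and its eigenvalue on `Ω k` is the Fourier coefficient
`f k`; this carries the formula from `N` to `N + 1`.

At `N = 0` the formula is Fourier inversion for the point mass at `ē`. The `ω i` are orthogonal
and as many as the double cosets, so they span the bi-`L`-invariant functions, and orthogonality
gives `∑ i, d i * ω i = r * 1_L`. Evaluating the generating identity of the `Ω k` at `t = d`
turns this into `∑ k, d_k * Ω k = r ^ n * 1_{L^n}`.
-/

open Finset

theorem inv_card_mul_sum_eq_of_forall_eq {G : Type} [Group G] {H : Subgroup G} [Fintype H]
    {T : H → ℂ} {c : ℂ} (hT : ∀ h, T h = c) : (Fintype.card H : ℂ)⁻¹ * ∑ h, T h = c := by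
  have : (Fintype.card H : ℂ) ≠ 0 := Nat.cast_ne_zero.mpr Fintype.card_ne_zero
  simp only [hT, sum_const, card_univ, nsmul_eq_mul]
  field_simp

namespace IsZSF

variable {G : Type} [Group G] [Fintype G] {H : Subgroup G} {φ ψ : G → ℂ}

theorem mul_left_mem (hφ : IsZSF G H φ) {h : G} (hh : h ∈ H) (g : G) : φ (h * g) = φ g := by
  simpa using hφ.2.1 g h hh 1 H.one_mem

theorem mul_right_mem (hφ : IsZSF G H φ) (g : G) {h : G} (hh : h ∈ H) : φ (g * h) = φ g := by
  simpa using hφ.2.1 g 1 H.one_mem h hh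

theorem apply_of_mem (hφ : IsZSF G H φ) {h : G} (hh : h ∈ H) : φ h = 1 := by
  simpa [hφ.1] using hφ.mul_right_mem 1 hh

theorem sum_apply_mul_inv_mul (hφ : IsZSF G H φ) {C : G → ℂ}
    (hC : ∀ w, ∀ h ∈ H, C (w * h) = C w) (x : G) :
    ∑ w, φ (x * w⁻¹) * C w = φ x * ∑ w, φ w⁻¹ * C w := by
  have hshift : ∀ h : H, ∑ w, φ (x * h * w⁻¹) * C w = ∑ w, φ (x * w⁻¹) * C w := fun h => by
    rw [← Equiv.sum_comp (Equiv.mulRight (h : G))]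
    refine sum_congr rfl fun w _ => ?_
    simp only [Equiv.coe_mulRight, mul_inv_rev, hC w h h.2, mul_assoc, mul_inv_cancel_left]
  calc ∑ w, φ (x * w⁻¹) * C w
      = (Fintype.card H : ℂ)⁻¹ * ∑ h : H, ∑ w, φ (x * h * w⁻¹) * C w :=
        (inv_card_mul_sum_eq_of_forall_eq hshift).symm
    _ = ∑ w, ((Fintype.card H : ℂ)⁻¹ * ∑ h : H, φ (x * h * w⁻¹)) * C w := by
        rw [sum_comm, mul_sum]
        refine sum_congr rfl fun w _ => ?_
        rw [mul_sum, mul_sum, sum_mul]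
        exact sum_congr rfl fun h _ => by ring
    _ = φ x * ∑ w, φ w⁻¹ * C w := by
        rw [mul_sum]
        exact sum_congr rfl fun w _ => by rw [hφ.2.2]; ring

theorem comp_inv (hφ : IsZSF G H φ) : IsZSF G H (fun g => φ g⁻¹) := by
  refine ⟨by simp [hφ.1], fun g h hh h' hh' => ?_, fun x y => ?_⟩
  · simpa [mul_assoc] using hφ.2.1 g⁻¹ h'⁻¹ (H.inv_mem hh') h⁻¹ (H.inv_mem hh)
  · rw [mul_comm (φ x⁻¹), ← hφ.2.2 y⁻¹ x⁻¹, ← Equiv.sum_comp (Equiv.inv H)]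
    simp [mul_assoc]

theorem conj (hφ : IsZSF G H φ) : IsZSF G H (fun g => starRingEnd ℂ (φ g)) := by
  refine ⟨by simp [hφ.1], fun g h hh h' hh' => by simp [hφ.2.1 g h hh h' hh'], fun x y => ?_⟩
  simpa [map_mul, map_sum, map_inv₀] using congrArg (starRingEnd ℂ) (hφ.2.2 x y)

theorem sum_mul_inv_mul_eq (hφ : IsZSF G H φ) (hψ : IsZSF G H ψ) (x : G) :
    (∑ g, φ g * ψ g⁻¹) * ψ x = φ x * ∑ g, φ g * ψ g⁻¹ := by
  have hleft := hψ.comp_inv.sum_apply_mul_inv_mul (C := fun g => φ g⁻¹)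
    (fun w h hh => by simp only [mul_inv_rev, hφ.mul_left_mem (H.inv_mem hh)]) x⁻¹
  have hright := hφ.sum_apply_mul_inv_mul (fun w h hh => hψ.mul_right_mem w hh) x
  simp only [inv_inv, mul_inv_rev] at hleft
  calc (∑ g, φ g * ψ g⁻¹) * ψ x = ψ x * ∑ u, ψ u * φ u⁻¹ := by
        rw [mul_comm, ← Equiv.sum_comp (Equiv.inv G)]
        simp [mul_comm]
    _ = ∑ w, φ (x * w⁻¹) * ψ w := by
        rw [← hleft]
        exact Fintype.sum_equiv (Equiv.mulRight x) _ _ fun u => by simp [mul_comm]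
    _ = φ x * ∑ g, φ g * ψ g⁻¹ := by
        rw [hright, ← Equiv.sum_comp (Equiv.inv G)]
        simp

theorem sum_mul_conj_ne_zero (hφ : IsZSF G H φ) : ∑ g, φ g * starRingEnd ℂ (φ g) ≠ 0 := by
  simp_rw [Complex.mul_conj, ← Complex.ofReal_sum, Complex.ofReal_ne_zero]
  exact (sum_pos' (fun g _ => Complex.normSq_nonneg _) ⟨1, mem_univ _, by simp [hφ.1]⟩).ne'

theorem eq_of_sum_mul_inv_ne_zero (hφ : IsZSF G H φ) (hψ : IsZSF G H ψ)
    (hne : ∑ g, φ g * ψ g⁻¹ ≠ 0) : φ = ψ :=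
  funext fun x => (mul_left_cancel₀ hne (by rw [sum_mul_inv_mul_eq hφ hψ, mul_comm])).symm

theorem conj_apply (hφ : IsZSF G H φ) (x : G) : starRingEnd ℂ (φ x) = φ x⁻¹ := by
  have h := hφ.eq_of_sum_mul_inv_ne_zero hφ.comp_inv.conj (by simpa using hφ.sum_mul_conj_ne_zero)
  simpa using (congrFun h x⁻¹).symm

theorem sum_mul_inv_eq_zero_of_ne (hφ : IsZSF G H φ) (hψ : IsZSF G H ψ) (hne : φ ≠ ψ) :
    ∑ g, φ g * ψ g⁻¹ = 0 := by
  by_contra h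
  exact hne (hφ.eq_of_sum_mul_inv_ne_zero hψ h)

theorem sum_mul_apply_inv_self (hφ : IsZSF G H φ) :
    ∑ g, φ g * φ g⁻¹ = ∑ g, φ g * starRingEnd ℂ (φ g) := by
  simp_rw [hφ.conj_apply]

theorem sum_mul_kernel (hφ : IsZSF G H φ) {Q : G → G → ℂ}
    (hQ : ∀ u a b, Q (u * a) (u * b) = Q a b) (hQH : ∀ b, ∀ h ∈ H, Q 1 (b * h) = Q 1 b) (x : G) :
    ∑ a, φ a * Q a x = (∑ b, Q 1 b * starRingEnd ℂ (φ b)) * φ x := by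
  calc ∑ a, φ a * Q a x = ∑ w, φ (x * w⁻¹) * Q 1 w :=
        Fintype.sum_equiv ((Equiv.inv G).trans (Equiv.mulRight x)) _ _ fun a => by
          simp [← hQ a⁻¹ a x]
    _ = _ := by
        rw [hφ.sum_apply_mul_inv_mul hQH, mul_comm]
        simp_rw [hφ.conj_apply, mul_comm (Q 1 _)]

end IsZSF

theorem apply_doubleCosetMk_out {K : Type} [Group K] {L : Subgroup K} {f : K → ℂ}
    (hf : ∀ g, ∀ h ∈ L, ∀ h' ∈ L, f (h * g * h') = f g) (a : K) :
    f (DoubleCoset.mk L L a).out = f a := by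
  obtain ⟨h, h', hh, hh', he⟩ := DoubleCoset.mk_out_eq_mul L L a
  rw [he, hf a h hh h' hh']

section Completeness

variable {K : Type} [Group K] [Fintype K] {L : Subgroup K} {s : ℕ} {ω : Fin s → K → ℂ}

theorem sum_lincomb_mul_inv_eq (hzsf : ∀ i, IsZSF K L (ω i)) (hinj : Function.Injective ω)
    (c : Fin s → ℂ) (i : Fin s) :
    ∑ g, (∑ j, c j * ω j g) * ω i g⁻¹ = c i * ∑ g, ω i g * ω i g⁻¹ := by
  simp_rw [sum_mul, mul_assoc]
  rw [sum_comm, ← Fintype.sum_ite_eq' i (fun j => c j * ∑ g, ω j g * ω i g⁻¹)]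
  refine sum_congr rfl fun j _ => ?_
  split_ifs with hji
  · rw [hji, mul_sum]
  · rw [← mul_sum, (hzsf j).sum_mul_inv_eq_zero_of_ne (hzsf i) (hinj.ne hji), mul_zero]

theorem linearIndependent_of_isZSF (hzsf : ∀ i, IsZSF K L (ω i))
    (hinj : Function.Injective ω) : LinearIndependent ℂ ω := by
  refine Fintype.linearIndependent_iff.mpr fun c hc i => ?_
  have h := sum_lincomb_mul_inv_eq hzsf hinj c i
  have hzero : ∀ g, ∑ j, c j * ω j g = 0 := fun g => by simpa using congrFun hc g
  simp only [hzero, zero_mul, sum_const_zero] at h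
  rw [(hzsf i).sum_mul_apply_inv_self] at h
  exact (mul_eq_zero.mp h.symm).resolve_right (hzsf i).sum_mul_conj_ne_zero

theorem exists_lincomb_eq_indicator (hzsf : ∀ i, IsZSF K L (ω i))
    (hinj : Function.Injective ω)
    (hcomplete : s = Nat.card (DoubleCoset.Quotient (L : Set K) (L : Set K))) :
    ∃ c : Fin s → ℂ, ∀ y, ∑ j, c j * ω j y = if y ∈ L then 1 else 0 := by
  let Q := DoubleCoset.Quotient (L : Set K) (L : Set K)
  have : Finite Q := Quotient.finite _
  have : Fintype Q := Fintype.ofFinite Q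
  let ωQ : Fin s → Q → ℂ := fun j q => ω j q.out
  have hlift : LinearMap.funLeft ℂ ℂ (DoubleCoset.mk L L) ∘ ωQ = ω :=
    funext fun j => funext (apply_doubleCosetMk_out (hzsf j).2.1)
  have hli : LinearIndependent ℂ ωQ :=
    LinearIndependent.of_comp _ (hlift ▸ linearIndependent_of_isZSF hzsf hinj)
  have hspan := hli.span_eq_top_of_card_eq_finrank' (by
    rw [Module.finrank_fintype_fun_eq_card, Fintype.card_fin, hcomplete, Nat.card_eq_fintype_card])
  obtain ⟨c, hc⟩ := (Submodule.mem_span_range_iff_exists_fun ℂ).mp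
    (hspan ▸ Submodule.mem_top : (fun q : Q => if q.out ∈ L then (1 : ℂ) else 0) ∈ _)
  refine ⟨c, fun y => ?_⟩
  have hy := congrFun hc (DoubleCoset.mk L L y)
  simp only [Finset.sum_apply, Pi.smul_apply, smul_eq_mul, ωQ,
    apply_doubleCosetMk_out (hzsf _).2.1] at hy
  rw [hy, apply_doubleCosetMk_out (f := fun g => if g ∈ L then (1 : ℂ) else 0)]
  intro g h hh h' hh'
  simp only [L.mul_mem_cancel_left hh, L.mul_mem_cancel_right hh']

theorem sum_dim_mul_eq_indicator (hzsf : ∀ i, IsZSF K L (ω i)) (hinj : Function.Injective ω)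
    (hcomplete : s = Nat.card (DoubleCoset.Quotient (L : Set K) (L : Set K))) {d : Fin s → ℕ}
    (hd : ∀ i, (Fintype.card K : ℂ)⁻¹ *
      ∑ g : K, ω i g * (starRingEnd ℂ) (ω i g) = ((d i : ℂ))⁻¹)
    {r : ℕ} (hr : r * Nat.card L = Nat.card K) (y : K) :
    ∑ j, (d j : ℂ) * ω j y = if y ∈ L then (r : ℂ) else 0 := by
  obtain ⟨c, hc⟩ := exists_lincomb_eq_indicator hzsf hinj hcomplete
  have hK : (Fintype.card K : ℂ) ≠ 0 := Nat.cast_ne_zero.mpr Fintype.card_ne_zero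
  have hL : (Fintype.card L : ℂ) ≠ 0 := Nat.cast_ne_zero.mpr Fintype.card_ne_zero
  have hrL : (r : ℂ) * Fintype.card L = Fintype.card K := by
    simp only [Nat.card_eq_fintype_card] at hr
    exact_mod_cast hr
  have hcoeff : ∀ j, (d j : ℂ) = r * c j := by
    intro j
    have hpair := sum_lincomb_mul_inv_eq hzsf hinj c j
    have hind : ∀ g, (if g ∈ L then (1 : ℂ) else 0) * ω j g⁻¹ = if g ∈ L then 1 else 0 :=
      fun g => by
        split_ifs with hg
        · rw [(hzsf j).apply_of_mem (L.inv_mem hg), one_mul]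
        · rw [zero_mul]
    simp only [hc, hind, sum_boole, (hzsf j).sum_mul_apply_inv_self] at hpair
    rw [← Fintype.card_subtype] at hpair
    rw [← mul_inv_cancel_left₀ hK (∑ g, _), hd j] at hpair
    have hdj : (d j : ℂ) ≠ 0 := fun h0 => by simp [h0] at hpair
    field_simp at hpair
    exact mul_right_cancel₀ hL (by linear_combination hpair - c j * hrL)
  simp_rw [hcoeff, mul_assoc, ← mul_sum, hc, mul_ite, mul_one, mul_zero]

end Completeness

theorem MvPolynomial.IsHomogeneous.eval_eq_sum_antidiagonalTuple {R : Type*} [CommSemiring R]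
    {s n : ℕ} {P : MvPolynomial (Fin s) R} (hP : P.IsHomogeneous n) (x : Fin s → R) :
    MvPolynomial.eval x P = ∑ k ∈ Nat.antidiagonalTuple s n,
      P.coeff (Finsupp.equivFunOnFinite.symm k) * ∏ j, x j ^ k j := by
  have hsub : P.support ⊆
      (Nat.antidiagonalTuple s n).map Finsupp.equivFunOnFinite.symm.toEmbedding := by
    intro m hm
    refine mem_map.mpr ⟨m, Nat.mem_antidiagonalTuple.mpr ?_, by simp⟩
    rw [← Finsupp.degree_eq_sum]
    by_contra h
    exact MvPolynomial.mem_support_iff.mp hm (hP.coeff_eq_zero h)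
  rw [MvPolynomial.eval_eq', sum_subset hsub fun m _ hm => by
    rw [MvPolynomial.notMem_support_iff.mp hm, zero_mul], sum_map]
  simp

theorem sum_multinomial_mul_eq_indicator {K : Type} [Group K] {L : Subgroup K} {s n : ℕ}
    {ω : Fin s → K → ℂ} {Ω : (Fin s → ℕ) → (Fin n → K) → ℂ} (hGen : GenId K s n ω Ω)
    {d : Fin s → ℕ} {r : ℕ} (hbase : ∀ y, ∑ j, (d j : ℂ) * ω j y = if y ∈ L then (r : ℂ) else 0)
    (x : Fin n → K) :
    ∑ k ∈ Nat.antidiagonalTuple s n,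
        ((∏ i, (d i : ℂ) ^ k i) * (Nat.multinomial Finset.univ k : ℂ)) * Ω k x =
      if ∀ i, x i ∈ L then (r : ℂ) ^ n else 0 := by
  let P : MvPolynomial (Fin s) ℂ :=
    ∏ i : Fin n, ∑ j : Fin s, MvPolynomial.C (ω j (x i)) * MvPolynomial.X j
  have hP : P.IsHomogeneous n := by
    simpa using MvPolynomial.IsHomogeneous.prod (univ : Finset (Fin n)) _ (fun _ => 1) fun i _ =>
      MvPolynomial.IsHomogeneous.sum (univ : Finset (Fin s))
        (fun j => MvPolynomial.C (ω j (x i)) * MvPolynomial.X j) 1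
        fun j _ => MvPolynomial.isHomogeneous_C_mul_X _ _
  calc _ = MvPolynomial.eval (fun j => (d j : ℂ)) P := by
        rw [hP.eval_eq_sum_antidiagonalTuple]
        refine sum_congr rfl fun k hk => ?_
        rw [hGen x k (Nat.mem_antidiagonalTuple.mp hk)]
        ring
    _ = ∏ i, if x i ∈ L then (r : ℂ) else 0 := by
        simp only [P, map_prod, map_sum, map_mul, MvPolynomial.eval_C, MvPolynomial.eval_X,
          ← hbase, mul_comm]
    _ = _ := by simp [prod_ite_zero]

theorem sum_comp_pi_mk {ι : Type} [Fintype ι] [DecidableEq ι] {K : Type} [Group K] [Fintype K]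
    (L : Subgroup K) (F : (ι → K ⧸ L) → ℂ) :
    ∑ y : ι → K, F (fun i => (y i : K ⧸ L)) =
      (Fintype.card L : ℂ) ^ Fintype.card ι * ∑ q, F q := by
  let e : (ι → K) ≃ (ι → K ⧸ L) × (ι → L) :=
    (Equiv.piCongrRight fun _ => Subgroup.groupEquivQuotientProdSubgroup).trans
      (Equiv.arrowProdEquivProdArrow _ _ _)
  rw [Fintype.sum_equiv e (fun y => F fun i => y i) (fun ql => F ql.1) fun _ => rfl,
    Fintype.sum_prod_type, mul_sum]
  simp [Fintype.card_pi]

theorem Wreath.sum_left {n : ℕ} {K : Type} [Group K] [Fintype K] (F : (Fin n → K) → ℂ) :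
    ∑ w : Wreath n K, F w.left = n.factorial * ∑ y, F y := by
  rw [Fintype.sum_equiv SemidirectProduct.equivProd (fun w => F w.left) (fun yσ => F yσ.1)
    fun _ => rfl, Fintype.sum_prod_type_right]
  simp [Fintype.card_perm]

section UrnStep

variable {K : Type} [Group K] {L : Subgroup K} {x₀ : K}

theorem mul_mul_mem_dcoset_iff {a h h' : K} (hh : h ∈ L) (hh' : h' ∈ L) :
    h * a * h' ∈ dcoset K L x₀ ↔ a ∈ dcoset K L x₀ := by
  constructor
  · rintro ⟨u, hu, v, hv, huv⟩
    refine ⟨h⁻¹ * u, L.mul_mem (L.inv_mem hh) hu, v * h'⁻¹, L.mul_mem hv (L.inv_mem hh'), ?_⟩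
    rw [show a = h⁻¹ * (h * a * h') * h'⁻¹ by group, huv]
    group
  · rintro ⟨u, hu, v, hv, rfl⟩
    exact ⟨h * u, L.mul_mem hh hu, v * h', L.mul_mem hv hh', by group⟩

theorem out_inv_mul_out_mem_dcoset_iff (x y : K) :
    (x : K ⧸ L).out⁻¹ * (y : K ⧸ L).out ∈ dcoset K L x₀ ↔ x⁻¹ * y ∈ dcoset K L x₀ := by
  obtain ⟨l, hx⟩ := QuotientGroup.mk_out_eq_mul L x
  obtain ⟨l', hy⟩ := QuotientGroup.mk_out_eq_mul L y
  rw [hx, hy, show (x * l)⁻¹ * (y * l') = (l : K)⁻¹ * (x⁻¹ * y) * l' by group]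
  exact mul_mul_mem_dcoset_iff (L.inv_mem l.2) l'.2

variable [Fintype K]

theorem step_mk_mul (n m : ℕ) (p : ℝ) (u x y : Fin n → K) :
    step K L x₀ n m p (fun i => ((u i * x i : K) : K ⧸ L)) (fun i => ((u i * y i : K) : K ⧸ L)) =
      step K L x₀ n m p (fun i => (x i : K ⧸ L)) (fun i => (y i : K ⧸ L)) := by
  have hmk : ∀ i, ((u i * x i : K) : K ⧸ L) = (u i * y i : K) ↔ (x i : K ⧸ L) = y i := fun i => by
    rw [QuotientGroup.eq, QuotientGroup.eq, mul_inv_rev, mul_assoc, inv_mul_cancel_left]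
  have hdc : ∀ j, ((u j * x j : K) : K ⧸ L).out⁻¹ * ((u j * y j : K) : K ⧸ L).out ∈
      dcoset K L x₀ ↔ (x j : K ⧸ L).out⁻¹ * (y j : K ⧸ L).out ∈ dcoset K L x₀ := fun j => by
    rw [out_inv_mul_out_mem_dcoset_iff, out_inv_mul_out_mem_dcoset_iff, mul_inv_rev, mul_assoc,
      inv_mul_cancel_left]
  unfold step
  refine if_congr ?_ rfl (if_congr ?_ rfl rfl)
  · simp only [funext_iff, hmk]
  · exact exists_congr fun j => and_congr (forall_congr' fun i => imp_congr_right fun _ => hmk i)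
      (hdc j)

theorem step_comp_perm (n m : ℕ) (p : ℝ) (τ : Equiv.Perm (Fin n)) (x y : Fin n → K ⧸ L) :
    step K L x₀ n m p (x ∘ τ) (y ∘ τ) = step K L x₀ n m p x y := by
  unfold step
  refine if_congr ?_ rfl (if_congr ?_ rfl rfl)
  · exact τ.surjective.injective_comp_right.eq_iff
  · refine τ.exists_congr fun j => and_congr (τ.forall_congr fun i => ?_) Iff.rfl
    simp only [Function.comp_apply, ne_eq, τ.injective.eq_iff]

end UrnStep

noncomputable def urnKernel (K : Type) [Group K] [Fintype K] (L : Subgroup K) (x₀ : K)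
    (n m : ℕ) (p : ℝ) (a b : Wreath n K) : ℂ :=
  step K L x₀ n m p (fun i => (a.left i : K ⧸ L)) (fun i => (b.left i : K ⧸ L))

section UrnKernel

variable {K : Type} [Group K] [Fintype K] {L : Subgroup K} {x₀ : K} {n m : ℕ} {p : ℝ}

theorem urnKernel_mul_mul (w a b : Wreath n K) :
    urnKernel K L x₀ n m p (w * a) (w * b) = urnKernel K L x₀ n m p a b := by
  unfold urnKernel
  exact congrArg _ ((step_mk_mul n m p w.left (a.left ∘ ⇑w.right⁻¹) (b.left ∘ ⇑w.right⁻¹)).trans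
    (step_comp_perm n m p w.right⁻¹ (fun i => (a.left i : K ⧸ L)) (fun i => (b.left i : K ⧸ L))))

theorem urnKernel_mul_mem (a b : Wreath n K) {h : Wreath n K} (hh : h ∈ wreathSubgroup n K L) :
    urnKernel K L x₀ n m p a (b * h) = urnKernel K L x₀ n m p a b := by
  unfold urnKernel
  congr 2
  funext i
  exact QuotientGroup.mk_mul_of_mem _ (hh _)

end UrnKernel

section Eigen

variable {K : Type} [Group K] [Fintype K] {L : Subgroup K} {n : ℕ} {Om : (Fin n → K) → ℂ}

theorem apply_out_mk (hΦ : IsZSF (Wreath n K) (wreathSubgroup n K L) (fun w => Om w.left))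
    (y : Fin n → K) : Om (fun i => (y i : K ⧸ L).out) = Om y := by
  choose l hl using fun i => QuotientGroup.mk_out_eq_mul L (y i)
  have hmem : (⟨fun i => (l i : K), 1⟩ : Wreath n K) ∈ wreathSubgroup n K L := fun i => (l i).2
  rw [funext hl]
  exact hΦ.mul_right_mem ⟨y, 1⟩ hmem

theorem sum_out_mul_step (x₀ : K) (m : ℕ) (p : ℝ)
    (hΦ : IsZSF (Wreath n K) (wreathSubgroup n K L) (fun w => Om w.left)) (g : Fin n → K) :
    ∑ q : Fin n → K ⧸ L, Om (fun i => (q i).out) * step K L x₀ n m p q (fun i => (g i : K ⧸ L)) =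
      (∑ w : Wreath n K,
          ((step K L x₀ n m p (eQ K L n) (fun i => ((w.left i : K) : K ⧸ L)) : ℂ) /
            ((Nat.card L : ℂ) ^ n * (n.factorial : ℂ))) * (starRingEnd ℂ) (Om w.left)) * Om g := by
  have hkernel := hΦ.sum_mul_kernel (Q := urnKernel K L x₀ n m p) urnKernel_mul_mul
    (fun b h hh => urnKernel_mul_mem 1 b hh) (⟨g, 1⟩ : Wreath n K)
  have hlift : ∑ a : Wreath n K, Om a.left * urnKernel K L x₀ n m p a ⟨g, 1⟩ =
      n.factorial * ((Fintype.card L : ℂ) ^ n *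
        ∑ q : Fin n → K ⧸ L, Om (fun i => (q i).out) * step K L x₀ n m p q (fun i => g i)) := by
    refine (Wreath.sum_left fun y => Om y * step K L x₀ n m p (fun i => y i) fun i => g i).trans ?_
    have hfib := sum_comp_pi_mk L fun q : Fin n → K ⧸ L =>
      Om (fun i => (q i).out) * step K L x₀ n m p q (fun i => g i)
    simp only [Fintype.card_fin, apply_out_mk hΦ] at hfib
    rw [hfib]
  rw [hlift] at hkernel
  have hne : (Fintype.card L : ℂ) ^ n * n.factorial ≠ 0 := mul_ne_zero
    (pow_ne_zero _ (Nat.cast_ne_zero.mpr Fintype.card_ne_zero))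
    (Nat.cast_ne_zero.mpr n.factorial_ne_zero)
  simp_rw [Nat.card_eq_fintype_card, div_mul_eq_mul_div, ← sum_div, div_mul_eq_mul_div,
    eq_div_iff hne]
  convert hkernel using 1
  · ring
  · rfl

end Eigen

theorem eQ_eq_iff {K : Type} [Group K] {L : Subgroup K} {n : ℕ} (g : Fin n → K) :
    eQ K L n = (fun i => (g i : K ⧸ L)) ↔ ∀ i, g i ∈ L := by
  simp [eQ, funext_iff, QuotientGroup.eq]

theorem n_step_probability_formula_general
    (K : Type) [Group K] [Fintype K] (L : Subgroup K)
    (s : ℕ)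
    (ω : Fin s → K → ℂ)
    (hzsf : ∀ i, IsZSF K L (ω i))
    (hinj : Function.Injective ω)
    (hcomplete : s = Nat.card (DoubleCoset.Quotient (L : Set K) (L : Set K)))
    (x₀ : K)
    (m : ℕ)
    (p : ℝ)
    (r : ℕ) (hr : r * Nat.card L = Nat.card K)
    (d : Fin s → ℕ)
    (hd : ∀ i, (Fintype.card K : ℂ)⁻¹ *
      ∑ g : K, ω i g * (starRingEnd ℂ) (ω i g) = ((d i : ℂ))⁻¹)
    (n : ℕ)
    (Ω : (Fin s → ℕ) → (Fin n → K) → ℂ)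
    (hGen : GenId K s n ω Ω)
    (hΩ : ∀ k : Fin s → ℕ, (∑ i, k i = n) →
      IsZSF (Wreath n K) (wreathSubgroup n K L) (fun w => Ω k w.left))
    (f : (Fin s → ℕ) → ℂ)
    (hf : ∀ k : Fin s → ℕ, f k = ∑ w : Wreath n K,
        ((step K L x₀ n m p (eQ K L n) (fun i => ((w.left i : K) : K ⧸ L)) : ℂ) /
            ((Nat.card L : ℂ) ^ n * (n.factorial : ℂ))) *
          (starRingEnd ℂ) (Ω k w.left))
    (N : ℕ) (g : Fin n → K) :
    (PmatC K L x₀ n m p ^ N) (eQ K L n) (fun i => ((g i : K) : K ⧸ L)) =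
      ((r : ℂ) ^ n)⁻¹ *
        ∑ k ∈ Finset.Nat.antidiagonalTuple s n,
          ((∏ i : Fin s, (d i : ℂ) ^ k i) * (Nat.multinomial Finset.univ k : ℂ)) *
            f k ^ N * Ω k g := by
  have hr0 : (r : ℂ) ^ n ≠ 0 := pow_ne_zero _ (Nat.cast_ne_zero.mpr fun h0 =>
    Nat.card_pos.ne' (by rw [← hr, h0, zero_mul] : Nat.card K = 0))
  induction N generalizing g with
  | zero =>
    simp_rw [pow_zero, mul_one, Matrix.one_apply, eQ_eq_iff,
      sum_multinomial_mul_eq_indicator hGen (sum_dim_mul_eq_indicator hzsf hinj hcomplete hd hr)]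
    split_ifs <;> simp [hr0]
  | succ N ih =>
    have heigen : ∀ k ∈ Finset.Nat.antidiagonalTuple s n,
        ∑ q, Ω k (fun i => (q i).out) * PmatC K L x₀ n m p q (fun i => g i) = f k * Ω k g :=
      fun k hk => by
        rw [hf k]
        exact sum_out_mul_step x₀ m p (hΩ k (Finset.Nat.mem_antidiagonalTuple.mp hk)) g
    calc _ = ∑ q, (PmatC K L x₀ n m p ^ N) (eQ K L n) (fun i => (q i).out) *
          PmatC K L x₀ n m p q (fun i => g i) := by
          simp only [pow_succ, Matrix.mul_apply, QuotientGroup.out_eq']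
      _ = ((r : ℂ) ^ n)⁻¹ * ∑ k ∈ Finset.Nat.antidiagonalTuple s n,
          ((∏ i : Fin s, (d i : ℂ) ^ k i) * (Nat.multinomial Finset.univ k : ℂ)) * f k ^ N *
            ∑ q, Ω k (fun i => (q i).out) * PmatC K L x₀ n m p q (fun i => g i) := by
          simp_rw [ih, mul_sum, sum_mul]
          rw [sum_comm]
          exact sum_congr rfl fun k _ => sum_congr rfl fun q _ => by ring
      _ = _ := by
          congr 1
          exact sum_congr rfl fun k hk => by rw [heigen k hk]; ring

/-- The `N`-step probability of the urn model:
`ν_N(ḡ) = r^{-n} ∑_{k ∈ X(s,n)} d_k f(k)^N Ω_k(g)`, where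
`d_k = d_0^{k_0} ⋯ d_{s-1}^{k_{s-1}} (n choose k)` and `f(k)` is the Fourier coefficient
`∑_w ν̃(w) conj(Ω_k(w))` of the step distribution. -/
theorem n_step_probability_formula
    (K : Type) [Group K] [Fintype K] (L : Subgroup K)
    (hGP : IsGelfandPair K L)
    (s : ℕ) [NeZero s] (hs : 2 ≤ s)
    (ω : Fin s → K → ℂ)
    (hzsf : ∀ i, IsZSF K L (ω i))
    (hω0 : ∀ g : K, ω 0 g = 1)
    (hinj : Function.Injective ω)
    (hcomplete : s = Nat.card (DoubleCoset.Quotient (L : Set K) (L : Set K)))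
    (x₀ : K) (hx₀ : x₀ ∉ L)
    (m : ℕ) (hm : m * Nat.card L = Nat.card (dcoset K L x₀))
    (p : ℝ) (hp0 : 0 < m * p) (hp1 : m * p ≤ 1)
    (r : ℕ) (hr : r * Nat.card L = Nat.card K)
    (d : Fin s → ℕ)
    (hd : ∀ i, (Fintype.card K : ℂ)⁻¹ *
      ∑ g : K, ω i g * (starRingEnd ℂ) (ω i g) = ((d i : ℂ))⁻¹)
    (n : ℕ) (hn : 0 < n)
    (Ω : (Fin s → ℕ) → (Fin n → K) → ℂ)
    (hGen : GenId K s n ω Ω)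
    (hΩ : ∀ k : Fin s → ℕ, (∑ i, k i = n) →
      IsZSF (Wreath n K) (wreathSubgroup n K L) (fun w => Ω k w.left))
    (f : (Fin s → ℕ) → ℂ)
    (hf : ∀ k : Fin s → ℕ, f k = ∑ w : Wreath n K,
        ((step K L x₀ n m p (eQ K L n) (fun i => ((w.left i : K) : K ⧸ L)) : ℂ) /
            ((Nat.card L : ℂ) ^ n * (n.factorial : ℂ))) *
          (starRingEnd ℂ) (Ω k w.left))
    (N : ℕ) (g : Fin n → K) :
    (PmatC K L x₀ n m p ^ N) (eQ K L n) (fun i => ((g i : K) : K ⧸ L)) =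
      ((r : ℂ) ^ n)⁻¹ *
        ∑ k ∈ Finset.Nat.antidiagonalTuple s n,
          ((∏ i : Fin s, (d i : ℂ) ^ k i) * (Nat.multinomial Finset.univ k : ℂ)) *
            f k ^ N * Ω k g :=
  n_step_probability_formula_general K L s ω hzsf hinj hcomplete x₀ m p r hr d hd n Ω hGen hΩ f hf N
    g
end

section
/- Write ω_1² = ∑_{j=0}^{s-1} a_j ω_j in the Hecke algebra of the Gelfand pair (K,L). Then for Q(x̄) = (1/n)∑_{j=1}^n ω_1(x_j), one has Q(x̄)² = a_0/n + (1/n)∑_{j=1}^{s-1} a_j Ω_{(n-1,0,...,1,...,0)}(x) + (1−1/n)·Ω_{(n-2,2,0,...,0)}(x), where the index (n−1,0,...,1,...,0) has the 1 in position j. -/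
/-!
Since `ω₀ = 1`, the coefficient of `t₀^(n-r) t_j^r` in `∏ᵢ (∑ⱼ ωⱼ(xᵢ) tⱼ)` is the elementary
symmetric polynomial `e_r` of the values `ωⱼ(x₁), …, ωⱼ(xₙ)`. Hence
`n Ω_{(n-1,…,1,…)}(x) = ∑ᵢ ωⱼ(xᵢ)` and, by Newton's identity `2 e₂ = p₁² - p₂`,
`n (n-1) Ω_{(n-2,2,0,…)}(x) = (∑ᵢ ω₁(xᵢ))² - ∑ᵢ ω₁(xᵢ)²`. Expanding `ω₁(xᵢ)² = ∑ⱼ aⱼ ωⱼ(xᵢ)` in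
the last sum turns `Q² = (∑ᵢ ω₁(xᵢ))² / n²` into the formula.
-/

open scoped BigOperators

attribute [local instance] Classical.propDecidable

open Finset MvPolynomial

section CoeffProdLinear

variable {ι σ R : Type*} [Fintype ι] [CommSemiring R]

theorem coeff_prod_sum_C_mul_X_s15 [DecidableEq ι] [Fintype σ] [DecidableEq σ] (c : ι → σ → R)
    (m : σ →₀ ℕ) :
    coeff m (∏ i, ∑ k, C (c i k) * X k) =
      ∑ g : ι → σ with ∑ i, Finsupp.single (g i) 1 = m, ∏ i, c i (g i) := by
  rw [prod_univ_sum, sum_filter]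
  simp only [C_mul_X_eq_monomial, ← monomial_sum_prod, coeff_sum, coeff_monomial,
    Fintype.piFinset_univ]

theorem sum_single_ite_mem [DecidableEq ι] (T : Finset ι) (k₀ k : σ) :
    ∑ i, Finsupp.single (if i ∈ T then k else k₀) 1 =
      Finsupp.single k₀ (Fintype.card ι - #T) + Finsupp.single k #T := by
  have hsingle : ∀ i, Finsupp.single (if i ∈ T then k else k₀) 1 =
      if i ∈ T then Finsupp.single k 1 else Finsupp.single k₀ 1 :=
    fun i => apply_ite (Finsupp.single · 1) _ _ _
  simp only [hsingle, sum_ite, sum_const, Finsupp.smul_single, smul_eq_mul, mul_one,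
    filter_mem_eq_inter, univ_inter, filter_not, ← compl_eq_univ_sdiff, card_compl]
  rw [add_comm]

theorem mem_support_of_sum_single_eq {g : ι → σ} {m : σ →₀ ℕ}
    (hg : ∑ i, Finsupp.single (g i) 1 = m) (i : ι) : g i ∈ m.support := by
  rw [Finsupp.mem_support_iff, ← hg, Finsupp.finsetSum_apply]
  exact (sum_pos' (fun _ _ => by positivity) ⟨i, mem_univ _, by simp⟩).ne'

theorem coeff_single_add_single_prod_sum_C_mul_X [DecidableEq ι] [Fintype σ] [DecidableEq σ]
    (c : ι → σ → R) {k₀ k : σ} (hk : k₀ ≠ k)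
    (hc : ∀ i, c i k₀ = 1) (r : ℕ) :
    coeff (Finsupp.single k₀ (Fintype.card ι - r) + Finsupp.single k r)
        (∏ i, ∑ k, C (c i k) * X k) =
      ∑ T ∈ powersetCard r univ, ∏ i ∈ T, c i k := by
  rw [coeff_prod_sum_C_mul_X_s15]
  symm
  refine sum_nbij' (fun T i => if i ∈ T then k else k₀) (fun g => ({i | g i = k} : Finset ι))
    (fun T hT => ?_) (fun g hg => ?_) (fun T _ => ?_) (fun g hg => ?_) (fun T _ => ?_)
  · rw [mem_powersetCard_univ] at hT
    simp only [mem_filter, mem_univ, true_and, sum_single_ite_mem, hT]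
  · simp only [mem_filter, mem_univ, true_and] at hg
    simpa [hk, Finsupp.finsetSum_apply, Finsupp.single_apply, eq_comm] using
      DFunLike.congr_fun hg k
  · ext i
    simp [hk]
  · simp only [mem_filter, mem_univ, true_and] at hg
    funext i
    have hgi := Finsupp.support_add.trans (union_subset_union Finsupp.support_single_subset
      Finsupp.support_single_subset) (mem_support_of_sum_single_eq hg i)
    rcases mem_union.mp hgi with h | h <;> simp_all
  · simp [apply_ite, hc]

end CoeffProdLinear

theorem two_mul_sum_powersetCard_two_prod {ι R : Type*} [Fintype ι] [DecidableEq ι] [CommRing R]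
    (f : ι → R) :
    2 * ∑ T ∈ powersetCard 2 univ, ∏ i ∈ T, f i = (∑ i, f i) ^ 2 - ∑ i, f i ^ 2 := by
  have newton := congrArg (aeval f) (psum_eq_mul_esymm_sub_sum ι R 2 two_pos)
  rw [show (antidiagonal 2).filter (fun a => a.1 ∈ Set.Ioo 0 2) = {(1, 1)} by decide] at newton
  simp [psum, esymm, powersetCard_one] at newton
  linear_combination newton

theorem Nat.multinomial_univ_single_add_single {σ : Type*} [Fintype σ] [DecidableEq σ]
    {k₀ k : σ} (hk : k₀ ≠ k) (a b : ℕ) :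
    Nat.multinomial univ ⇑(Finsupp.single k₀ a + Finsupp.single k b) = (a + b).choose a := by
  rw [← Nat.multinomial_congr_of_sdiff (subset_univ {k₀, k}) (fun i hi => ?_) (fun _ _ => rfl),
    Nat.binomial_eq_choose hk]
  · simp [hk, hk.symm]
  · simp only [mem_sdiff, mem_univ, mem_insert, mem_singleton, true_and, not_or] at hi
    simp [Ne.symm hi.1, Ne.symm hi.2]

theorem GenId.choose_mul_eq_sum_powersetCard {K : Type} [Group K] {s n : ℕ} [NeZero s]
    {ω : Fin s → K → ℂ} {Ω : (Fin s → ℕ) → (Fin n → K) → ℂ} (hGen : GenId K s n ω Ω)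
    (hω0 : ∀ g, ω 0 g = 1) {j : Fin s} (hj : j ≠ 0) {r : ℕ} (hr : r ≤ n) (x : Fin n → K) :
    (n.choose r : ℂ) * Ω (fun i => if i = 0 then n - r else if i = j then r else 0) x =
      ∑ T ∈ powersetCard r univ, ∏ i ∈ T, ω j (x i) := by
  have hindex : (fun i => if i = 0 then n - r else if i = j then r else 0) =
      ⇑(Finsupp.single 0 (n - r) + Finsupp.single j r : Fin s →₀ ℕ) := by
    funext i
    by_cases hi0 : i = 0 <;> by_cases hij : i = j <;> simp_all
  have hsum : ∑ i, (Finsupp.single 0 (n - r) + Finsupp.single j r : Fin s →₀ ℕ) i = n := by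
    simp only [Finsupp.coe_add, Pi.add_apply, sum_add_distrib, Finsupp.single_apply, sum_ite_eq,
      mem_univ, if_true]
    omega
  have hcoeff := coeff_single_add_single_prod_sum_C_mul_X (fun i k => ω k (x i)) (Ne.symm hj)
    (fun i => hω0 (x i)) r
  rw [Fintype.card_fin] at hcoeff
  have hgen := hGen x _ hsum
  rw [Finsupp.equivFunOnFinite_symm_coe, hcoeff,
    Nat.multinomial_univ_single_add_single (Ne.symm hj), Nat.sub_add_cancel hr,
    Nat.choose_symm hr] at hgen
  rw [hindex, hgen]

theorem GenId.mul_apply_one_eq_sum {K : Type} [Group K] {s n : ℕ} [NeZero s]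
    {ω : Fin s → K → ℂ} {Ω : (Fin s → ℕ) → (Fin n → K) → ℂ} (hGen : GenId K s n ω Ω)
    (hω0 : ∀ g, ω 0 g = 1) {j : Fin s} (hj : j ≠ 0) (hn : 1 ≤ n) (x : Fin n → K) :
    (n : ℂ) * Ω (fun i => if i = 0 then n - 1 else if i = j then 1 else 0) x =
      ∑ i, ω j (x i) := by
  simpa [powersetCard_one] using hGen.choose_mul_eq_sum_powersetCard hω0 hj hn x

theorem GenId.mul_apply_two_eq {K : Type} [Group K] {s n : ℕ} [NeZero s]
    {ω : Fin s → K → ℂ} {Ω : (Fin s → ℕ) → (Fin n → K) → ℂ} (hGen : GenId K s n ω Ω)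
    (hω0 : ∀ g, ω 0 g = 1) {j : Fin s} (hj : j ≠ 0) (hn : 2 ≤ n) (x : Fin n → K) :
    (n : ℂ) * (n - 1) * Ω (fun i => if i = 0 then n - 2 else if i = j then 2 else 0) x =
      (∑ i, ω j (x i)) ^ 2 - ∑ i, ω j (x i) ^ 2 := by
  have h := hGen.choose_mul_eq_sum_powersetCard hω0 hj hn x
  rw [Nat.cast_choose_two] at h
  rw [← two_mul_sum_powersetCard_two_prod, ← h]
  ring

theorem Q_squared_expansion_general
    (K : Type) [Group K]
    (s : ℕ) [NeZero s] (hs : 2 ≤ s)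
    (ω : Fin s → K → ℂ)
    (hω0 : ∀ g : K, ω 0 g = 1)
    (a : Fin s → ℂ)
    (ha : ∀ g : K, (ω ⟨1, hs⟩ g) ^ 2 = ∑ j : Fin s, a j * ω j g)
    (n : ℕ) (hn : 2 ≤ n)
    (Ω : (Fin s → ℕ) → (Fin n → K) → ℂ)
    (hGen : GenId K s n ω Ω)
    (x : Fin n → K) :
    ((n : ℂ)⁻¹ * ∑ j : Fin n, ω ⟨1, hs⟩ (x j)) ^ 2 =
      a 0 / n +
        (n : ℂ)⁻¹ * ∑ j ∈ Finset.univ.erase (0 : Fin s),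
          a j * Ω (fun i => if i = 0 then n - 1 else if i = j then 1 else 0) x +
        (1 - (n : ℂ)⁻¹) *
          Ω (fun i => if i = 0 then n - 2 else if i = ⟨1, hs⟩ then 2 else 0) x := by
  have hn0 : (n : ℂ) ≠ 0 := by norm_cast; omega
  have hΩ₁ : ∑ j ∈ univ.erase 0,
      a j * Ω (fun i => if i = 0 then n - 1 else if i = j then 1 else 0) x =
        (∑ j ∈ univ.erase 0, a j * ∑ i, ω j (x i)) / n := by
    rw [sum_div]
    refine sum_congr rfl fun j hj => ?_
    rw [← hGen.mul_apply_one_eq_sum hω0 (ne_of_mem_erase hj) (by omega) x]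
    field_simp
  have hΩ₂ := hGen.mul_apply_two_eq hω0 (j := ⟨1, hs⟩) (by simp [Fin.ext_iff]) hn x
  have hsq : ∑ i, ω ⟨1, hs⟩ (x i) ^ 2 = a 0 * n + ∑ j ∈ univ.erase 0, a j * ∑ i, ω j (x i) := by
    simp_rw [ha, mul_sum]
    rw [sum_comm, ← add_sum_erase _ _ (mem_univ 0)]
    simp [hω0, mul_comm]
  rw [hΩ₁]
  field_simp
  linear_combination hsq - hΩ₂

/-- Expansion of `Q²` (Proposition `Q2`): writing `ω₁² = ∑_j a_j ω_j`, one has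
`Q(x̄)² = a₀/n + (1/n) ∑_{j=1}^{s-1} a_j Ω_{(n-1,0,…,1,…,0)}(x) + (1 - 1/n) Ω_{(n-2,2,0,…,0)}(x)`. -/
theorem Q_squared_expansion
    (K : Type) [Group K] [Fintype K] (L : Subgroup K)
    (hGP : IsGelfandPair K L)
    (s : ℕ) [NeZero s] (hs : 2 ≤ s)
    (ω : Fin s → K → ℂ)
    (hzsf : ∀ i, IsZSF K L (ω i))
    (hω0 : ∀ g : K, ω 0 g = 1)
    (hinj : Function.Injective ω)
    (hcomplete : s = Nat.card (DoubleCoset.Quotient (L : Set K) (L : Set K)))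
    (a : Fin s → ℂ)
    (ha : ∀ g : K, (ω ⟨1, hs⟩ g) ^ 2 = ∑ j : Fin s, a j * ω j g)
    (n : ℕ) (hn : 2 ≤ n)
    (Ω : (Fin s → ℕ) → (Fin n → K) → ℂ)
    (hGen : GenId K s n ω Ω)
    (x : Fin n → K) :
    ((n : ℂ)⁻¹ * ∑ j : Fin n, ω ⟨1, hs⟩ (x j)) ^ 2 =
      a 0 / n +
        (n : ℂ)⁻¹ * ∑ j ∈ Finset.univ.erase (0 : Fin s),
          a j * Ω (fun i => if i = 0 then n - 1 else if i = j then 1 else 0) x +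
        (1 - (n : ℂ)⁻¹) *
          Ω (fun i => if i = 0 then n - 2 else if i = ⟨1, hs⟩ then 2 else 0) x :=
  Q_squared_expansion_general K s hs ω hω0 a ha n hn Ω hGen x
end

section
/- Under the assumptions ω_i(x_0) ∈ ℝ for all i, M = max_{1≤i≤s−1}ω_i(x_0) < 1, 0 < mp ≤ 1/2, and n ≥ 4, the variance of Q = (1/n)∑_j ω_1(x_j) under the N-step distribution ν_N satisfies V_{ν_N}(Q) ≤ 1/n for every N ≥ 0. -/
open scoped BigOperators

attribute [local instance] Classical.propDecidable

/-!
For a set `T` of urns, `∏_{j ∈ T} ω(x_j)` is an eigenfunction of the transition matrix with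
eigenvalue `1 - |T| (mp/n) (1 - ω(x₀))`: moving urn `j` to a random coset of `x_j L x₀ L`
averages `ω` over that double coset, which by the spherical functional equation multiplies
`ω(x_j)` by `ω(x₀)`. Starting from `ē`, this gives `E ω(x_j) = r^N` and
`E ω(x_j) ω(x_k) = ρ^N` for `j ≠ k`, where `r = 1 - u`, `ρ = 1 - 2u` and
`u = mp (1 - ω(x₀)) / n ∈ [0, 1/2]`. Since `|ω| ≤ 1` and `0 ≤ ρ ≤ r²`,
`V(Q) ≤ n⁻² · n + (1 - 1/n) ρ^N - r^{2N} ≤ 1/n`.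
-/

open Finset Matrix

section DoubleCoset

variable {K : Type} [Group K] {L : Subgroup K} {x₀ : K}

lemma one_notMem_dcoset (hx₀ : x₀ ∉ L) : (1 : K) ∉ dcoset K L x₀ := by
  rintro ⟨a, ha, b, hb, h⟩
  have hx₀_eq : x₀ = a⁻¹ * b⁻¹ := by rw [← mul_one a⁻¹, h]; group
  exact hx₀ (hx₀_eq ▸ L.mul_mem (L.inv_mem ha) (L.inv_mem hb))

lemma mul_mem_dcoset_iff_left {a u : K} (ha : a ∈ L) :
    a * u ∈ dcoset K L x₀ ↔ u ∈ dcoset K L x₀ := by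
  constructor
  · rintro ⟨b, hb, c, hc, h⟩
    exact ⟨a⁻¹ * b, L.mul_mem (L.inv_mem ha) hb, c, hc, by rw [← inv_mul_cancel_left a u, h]; group⟩
  · rintro ⟨b, hb, c, hc, rfl⟩
    exact ⟨a * b, L.mul_mem ha hb, c, hc, by group⟩

lemma mul_mem_dcoset_iff_right {u b : K} (hb : b ∈ L) :
    u * b ∈ dcoset K L x₀ ↔ u ∈ dcoset K L x₀ := by
  constructor
  · rintro ⟨a, ha, c, hc, h⟩
    exact ⟨a, ha, c * b⁻¹, L.mul_mem hc (L.inv_mem hb), by rw [← mul_assoc, ← h]; group⟩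
  · rintro ⟨a, ha, c, hc, rfl⟩
    exact ⟨a, ha, c * b, L.mul_mem hc hb, by group⟩

end DoubleCoset

lemma QuotientGroup.sum_comp_mk {K M : Type*} [Group K] [Fintype K] [AddCommMonoid M]
    {L : Subgroup K} [Fintype (K ⧸ L)] (F : K ⧸ L → M) :
    ∑ k : K, F k = Nat.card L • ∑ c, F c := by
  classical
  rw [← Fintype.sum_fiberwise' (QuotientGroup.mk : K → K ⧸ L) F, Finset.smul_sum]
  refine Finset.sum_congr rfl fun c _ => ?_
  rw [Finset.sum_const, Finset.card_univ, ← Nat.card_eq_fintype_card]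
  congr 1
  have hfiber := QuotientGroup.card_preimage_mk L {c}
  rwa [Nat.card_unique (α := ({c} : Set (K ⧸ L))), mul_one] at hfiber

lemma Fintype.sum_ite_forall_ne_eq_sum_update {ι α M : Type*} [Fintype ι] [DecidableEq ι]
    [Fintype α] [AddCommMonoid M] (x : ι → α) (j : ι) (H : (ι → α) → M) :
    ∑ y, (if ∀ i, i ≠ j → x i = y i then H y else 0) = ∑ c, H (Function.update x j c) := by
  have himage : ({y | ∀ i, i ≠ j → x i = y i} : Finset (ι → α)) =
      univ.image (Function.update x j) := by
    ext y
    simp only [mem_filter, mem_univ, true_and, mem_image]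
    constructor
    · intro hy
      refine ⟨y j, funext fun i => ?_⟩
      by_cases hi : i = j
      · rw [hi, Function.update_self]
      · rw [Function.update_of_ne hi, hy i hi]
    · rintro ⟨c, rfl⟩ i hi
      rw [Function.update_of_ne hi]
  rw [← Finset.sum_filter, himage,
    Finset.sum_image fun _ _ _ _ h => Function.update_injective x j h]

lemma Matrix.pow_mulVec_of_mulVec_eq_smul {ι R : Type*} [Fintype ι] [DecidableEq ι]
    [CommSemiring R] {A : Matrix ι ι R} {v : ι → R} {c : R} (h : A *ᵥ v = c • v) (N : ℕ) :
    A ^ N *ᵥ v = c ^ N • v := by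
  induction N with
  | zero => simp
  | succ N ih => rw [pow_succ, ← mulVec_mulVec, h, mulVec_smul, ih, smul_smul, pow_succ']

lemma sum_mul_sq_sum {X R : Type*} [Fintype X] [CommSemiring R] {n : ℕ} (w : X → R)
    (f : Fin n → X → R) :
    ∑ x, w x * (∑ j, f j x) ^ 2 = ∑ j, ∑ k, ∑ x, w x * (f j x * f k x) := by
  simp_rw [sq, sum_mul_sum, mul_sum]
  rw [sum_comm]
  exact sum_congr rfl fun j _ => sum_comm

lemma one_sub_two_mul_pow_le {u : ℝ} (hu : 2 * u ≤ 1) (N : ℕ) :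
    (1 - 2 * u) ^ N ≤ ((1 - u) ^ N) ^ 2 :=
  calc (1 - 2 * u) ^ N ≤ ((1 - u) ^ 2) ^ N :=
        pow_le_pow_left₀ (by linarith) (by nlinarith [sq_nonneg u]) N
    _ = ((1 - u) ^ N) ^ 2 := by rw [← pow_mul, ← pow_mul, mul_comm]

lemma sum_mul_mean {X 𝕜 : Type*} [Fintype X] [Field 𝕜] {n : ℕ} (hn : (n : 𝕜) ≠ 0)
    (w : X → 𝕜) {f : Fin n → X → 𝕜} {a : 𝕜} (ha : ∀ j, ∑ x, w x * f j x = a) :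
    ∑ x, w x * ((n : 𝕜)⁻¹ * ∑ j, f j x) = a := by
  simp_rw [mul_left_comm _ (n : 𝕜)⁻¹]
  rw [← mul_sum, sum_congr rfl fun x _ => mul_sum _ _ _, sum_comm, sum_congr rfl fun j _ => ha j,
    sum_const, card_univ, Fintype.card_fin, nsmul_eq_mul, inv_mul_cancel_left₀ hn]

lemma re_sum_mul_mean_sq_le {X : Type*} [Fintype X] {n : ℕ} (hn : n ≠ 0) {ν : X → ℝ}
    (hν0 : ∀ x, 0 ≤ ν x) (hν1 : ∑ x, ν x = 1) {f : Fin n → X → ℂ} (hf : ∀ j x, ‖f j x‖ ≤ 1)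
    {b : ℝ} (hb : ∀ j k, j ≠ k → ∑ x, (ν x : ℂ) * (f j x * f k x) = b) :
    (∑ x, (ν x : ℂ) * ((n : ℂ)⁻¹ * ∑ j, f j x) ^ 2).re ≤ 1 / n + (1 - 1 / n) * b := by
  have hrow : ∀ j, ∑ k, ∑ x, (ν x : ℂ) * (f j x * f k x) =
      ∑ x, (ν x : ℂ) * (f j x * f j x) + ((n : ℂ) - 1) * b := fun j => by
    rw [← add_sum_erase _ _ (mem_univ j),
      sum_congr rfl fun k hk => hb j k (ne_of_mem_erase hk).symm, sum_const,
      card_erase_of_mem (mem_univ j), card_univ, Fintype.card_fin, nsmul_eq_mul,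
      Nat.cast_sub (Nat.one_le_iff_ne_zero.mpr hn), Nat.cast_one]
  have hdiag : ∀ j, (∑ x, (ν x : ℂ) * (f j x * f j x)).re ≤ 1 := fun j => by
    rw [Complex.re_sum, ← hν1]
    refine sum_le_sum fun x _ => ?_
    rw [Complex.re_ofReal_mul]
    refine mul_le_of_le_one_right (hν0 x) ((Complex.re_le_norm _).trans ?_)
    rw [norm_mul]
    exact mul_le_one₀ (hf j x) (norm_nonneg _) (hf j x)
  have hdiag_sum : (∑ j, ∑ x, (ν x : ℂ) * (f j x * f j x)).re ≤ n := by
    rw [Complex.re_sum]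
    simpa using sum_le_sum fun j (_ : j ∈ univ) => hdiag j
  have hcast : ((n : ℂ)⁻¹ ^ 2 * (∑ j, ∑ x, (ν x : ℂ) * (f j x * f j x) + n * ((n - 1) * b))) =
      ((n : ℝ)⁻¹ ^ 2 : ℝ) * (∑ j, ∑ x, (ν x : ℂ) * (f j x * f j x)) +
        (((n : ℝ)⁻¹ * (n - 1) * b : ℝ) : ℂ) := by
    push_cast
    field_simp
  simp_rw [mul_pow, mul_left_comm _ ((n : ℂ)⁻¹ ^ 2)]
  rw [← mul_sum, sum_mul_sq_sum, sum_congr rfl fun j _ => hrow j, sum_add_distrib, sum_const,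
    card_univ, Fintype.card_fin, nsmul_eq_mul, hcast, Complex.add_re, Complex.re_ofReal_mul,
    Complex.ofReal_re]
  calc (n : ℝ)⁻¹ ^ 2 * (∑ j, ∑ x, (ν x : ℂ) * (f j x * f j x)).re + (n : ℝ)⁻¹ * (n - 1) * b
      ≤ (n : ℝ)⁻¹ ^ 2 * n + (n : ℝ)⁻¹ * (n - 1) * b := by gcongr
    _ = 1 / n + (1 - 1 / n) * b := by field_simp

lemma re_variance_mean_le {X : Type*} [Fintype X] {n : ℕ} (hn : n ≠ 0) {ν : X → ℝ}
    (hν0 : ∀ x, 0 ≤ ν x) (hν1 : ∑ x, ν x = 1) {f : Fin n → X → ℂ} (hf : ∀ j x, ‖f j x‖ ≤ 1)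
    {a b : ℝ} (ha : ∀ j, ∑ x, (ν x : ℂ) * f j x = a)
    (hb : ∀ j k, j ≠ k → ∑ x, (ν x : ℂ) * (f j x * f k x) = b) (hb0 : 0 ≤ b) (hab : b ≤ a ^ 2) :
    ((∑ x, (ν x : ℂ) * ((n : ℂ)⁻¹ * ∑ j, f j x) ^ 2) -
      (∑ x, (ν x : ℂ) * ((n : ℂ)⁻¹ * ∑ j, f j x)) ^ 2).re ≤ 1 / n := by
  have hsecond := re_sum_mul_mean_sq_le hn hν0 hν1 hf hb
  have hn_inv : 0 ≤ 1 / (n : ℝ) := by positivity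
  rw [sum_mul_mean (Nat.cast_ne_zero.mpr hn) _ ha, Complex.sub_re, ← Complex.ofReal_pow,
    Complex.ofReal_re]
  nlinarith

namespace IsZSF

variable {K : Type} [Group K] [Fintype K] {L : Subgroup K} {ω : K → ℂ}

lemma one : IsZSF K L 1 := by
  refine ⟨rfl, fun _ _ _ _ _ => rfl, fun _ _ => ?_⟩
  simp

lemma apply_mul_of_mem (hω : IsZSF K L ω) (g : K) {l : K} (hl : l ∈ L) : ω (g * l) = ω g := by
  simpa using hω.2.1 g 1 L.one_mem l hl

lemma apply_mk_out (hω : IsZSF K L ω) (g : K) : ω (g : K ⧸ L).out = ω g := by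
  obtain ⟨l, hl⟩ := QuotientGroup.mk_out_eq_mul L g
  rw [hl, hω.apply_mul_of_mem g l.2]

lemma apply_of_mem_dcoset (hω : IsZSF K L ω) {x₀ u : K} (hu : u ∈ dcoset K L x₀) :
    ω u = ω x₀ := by
  obtain ⟨a, ha, b, hb, rfl⟩ := hu
  exact hω.2.1 x₀ a ha b hb

lemma norm_le_one (hω : IsZSF K L ω) (g : K) : ‖ω g‖ ≤ 1 := by
  obtain ⟨g₀, -, hg₀⟩ := exists_max_image univ (fun k => ‖ω k‖) univ_nonempty
  have h1 : 1 ≤ ‖ω g₀‖ := by simpa [hω.1] using hg₀ 1 (mem_univ 1)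
  -- the spherical equation at `(g₀, g)` averages values of norm at most `‖ω g₀‖`
  have habs : ‖ω g₀‖ * ‖ω g‖ ≤ ‖ω g₀‖ :=
    calc ‖ω g₀‖ * ‖ω g‖ = (Fintype.card L : ℝ)⁻¹ * ‖∑ h : L, ω (g₀ * h * g)‖ := by
          rw [← norm_mul, ← hω.2.2 g₀ g, norm_mul, norm_inv, Complex.norm_natCast]
      _ ≤ (Fintype.card L : ℝ)⁻¹ * ∑ _h : L, ‖ω g₀‖ := by
          gcongr
          exact (norm_sum_le _ _).trans (sum_le_sum fun h _ => hg₀ _ (mem_univ _))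
      _ = ‖ω g₀‖ := by
          rw [sum_const, card_univ, nsmul_eq_mul]
          field_simp
  nlinarith

lemma sum_ite_mem_dcoset_apply_mul (hω : IsZSF K L ω) (x₀ g : K) :
    ∑ u : K, (if u ∈ dcoset K L x₀ then ω (g * u) else 0) =
      Nat.card (dcoset K L x₀) * (ω g * ω x₀) := by
  have hcard : (Fintype.card L : ℂ) ≠ 0 := Nat.cast_ne_zero.mpr Fintype.card_ne_zero
  -- `u ↦ a * u` permutes the double coset for `a ∈ L`, so the sum may be averaged over `L`
  have hshift : ∀ a : L, ∑ u : K, (if u ∈ dcoset K L x₀ then ω (g * (a * u)) else 0) =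
      ∑ u : K, (if u ∈ dcoset K L x₀ then ω (g * u) else 0) := fun a =>
    Fintype.sum_equiv (Equiv.mulLeft (a : K)) _ _ fun u => by
      simp [mul_mem_dcoset_iff_left a.2]
  apply mul_left_cancel₀ hcard
  calc (Fintype.card L : ℂ) * ∑ u : K, (if u ∈ dcoset K L x₀ then ω (g * u) else 0)
      = ∑ a : L, ∑ u : K, (if u ∈ dcoset K L x₀ then ω (g * (a * u)) else 0) := by
        simp only [hshift, sum_const, card_univ, nsmul_eq_mul]
    _ = ∑ u : K, (if u ∈ dcoset K L x₀ then ∑ a : L, ω (g * a * u) else 0) := by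
        rw [sum_comm]
        simp only [sum_ite_irrel, sum_const_zero, mul_assoc]
    _ = ∑ u : K, (if u ∈ dcoset K L x₀ then Fintype.card L * (ω g * ω x₀) else 0) := by
        refine sum_congr rfl fun u _ => ?_
        split_ifs with hu
        · rw [← hω.apply_of_mem_dcoset hu, ← hω.2.2 g u, mul_inv_cancel_left₀ hcard]
        · rfl
    _ = Fintype.card L * (Nat.card (dcoset K L x₀) * (ω g * ω x₀)) := by
        have hD : #{u | u ∈ dcoset K L x₀} = Nat.card (dcoset K L x₀) := by
          rw [Nat.card_eq_fintype_card, Fintype.card_subtype]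
        rw [← sum_filter, sum_const, nsmul_eq_mul, hD]
        ring

lemma sum_quotient_ite_mem_dcoset (hω : IsZSF K L ω) {x₀ : K} {m : ℕ}
    (hm : m * Nat.card L = Nat.card (dcoset K L x₀)) (g : K) :
    ∑ c : K ⧸ L, (if g⁻¹ * c.out ∈ dcoset K L x₀ then ω c.out else 0) = m * (ω g * ω x₀) := by
  have hcard : (Nat.card L : ℂ) ≠ 0 := Nat.cast_ne_zero.mpr Nat.card_pos.ne'
  have hlift : ∀ k : K, (if g⁻¹ * (k : K ⧸ L).out ∈ dcoset K L x₀ then ω (k : K ⧸ L).out else 0) =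
      if g⁻¹ * k ∈ dcoset K L x₀ then ω k else 0 := fun k => by
    obtain ⟨l, hl⟩ := QuotientGroup.mk_out_eq_mul L k
    rw [hl, ← mul_assoc, mul_mem_dcoset_iff_right l.2, hω.apply_mul_of_mem k l.2]
  apply mul_left_cancel₀ hcard
  rw [← nsmul_eq_mul, ← QuotientGroup.sum_comp_mk, sum_congr rfl fun k _ => hlift k,
    Fintype.sum_equiv (Equiv.mulLeft g⁻¹) _ (fun u => if u ∈ dcoset K L x₀ then ω (g * u) else 0)
      fun k => by simp, hω.sum_ite_mem_dcoset_apply_mul, ← hm]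
  push_cast
  ring

end IsZSF

section UrnChain

variable {K : Type} [Group K] [Fintype K] {L : Subgroup K} {x₀ : K} {n m : ℕ} {p : ℝ}

lemma step_eq_ite_add_sum (hx₀ : x₀ ∉ L) (x y : Fin n → K ⧸ L) :
    step K L x₀ n m p x y = (if x = y then 1 - m * p else 0) +
      ∑ j, if (∀ i, i ≠ j → x i = y i) ∧ (x j).out⁻¹ * (y j).out ∈ dcoset K L x₀
        then p / n else 0 := by
  have hself : ∀ c : K ⧸ L, c.out⁻¹ * c.out ∉ dcoset K L x₀ := fun c => by
    simpa using one_notMem_dcoset hx₀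
  -- a move changes exactly one coordinate, so at most one `j` qualifies
  have hunique : ∀ j ∈ univ, ∀ j' ∈ univ,
      ((∀ i, i ≠ j → x i = y i) ∧ (x j).out⁻¹ * (y j).out ∈ dcoset K L x₀) →
      ((∀ i, i ≠ j' → x i = y i) ∧ (x j').out⁻¹ * (y j').out ∈ dcoset K L x₀) → j = j' := by
    rintro j - j' - ⟨-, hj⟩ ⟨hj', -⟩
    by_contra hne
    rw [← hj' j hne] at hj
    exact hself _ hj
  rw [sum_ite_zero univ _ hunique, step]
  by_cases hxy : x = y
  · subst hxy
    simp [one_notMem_dcoset hx₀]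
  · simp [hxy]

lemma sum_step_mul (hx₀ : x₀ ∉ L) (x : Fin n → K ⧸ L) (F : (Fin n → K ⧸ L) → ℂ) :
    ∑ y, (step K L x₀ n m p x y : ℂ) * F y = (1 - m * p) * F x +
      p / n * ∑ j, ∑ c : K ⧸ L,
        if (x j).out⁻¹ * c.out ∈ dcoset K L x₀ then F (Function.update x j c) else 0 := by
  simp only [step_eq_ite_add_sum hx₀ x, Complex.ofReal_add, Complex.ofReal_sum,
    apply_ite ((↑) : ℝ → ℂ), Complex.ofReal_zero, add_mul, sum_add_distrib, sum_mul, ite_mul,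
    zero_mul, sum_ite_eq, mem_univ, if_true, ite_and]
  rw [sum_comm, mul_sum]
  congr 1
  · push_cast
    ring
  refine sum_congr rfl fun j _ => ?_
  rw [mul_sum]
  -- `convert` reconciles the two decidability instances of `∀ i, i ≠ j → x i = y i`
  convert Fintype.sum_ite_forall_ne_eq_sum_update x j _ using 3
  rw [Function.update_self, mul_ite, mul_zero, Complex.ofReal_div, Complex.ofReal_natCast]

lemma PmatC_mulVec_prod (hx₀ : x₀ ∉ L) (hm : m * Nat.card L = Nat.card (dcoset K L x₀))
    (hn : n ≠ 0) {ψ : Fin n → K → ℂ} (hψ : ∀ j, IsZSF K L (ψ j)) :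
    PmatC K L x₀ n m p *ᵥ (fun y => ∏ j, ψ j (y j).out) =
      (1 - m * p / n * ∑ j, (1 - ψ j x₀)) • fun y => ∏ j, ψ j (y j).out := by
  funext x
  have hcoord : ∀ j, ∑ c : K ⧸ L, (if (x j).out⁻¹ * c.out ∈ dcoset K L x₀
      then ∏ i, ψ i (Function.update x j c i).out else 0) = m * ψ j x₀ * ∏ i, ψ i (x i).out := by
    intro j
    have hupdate : ∀ c : K ⧸ L, ∏ i, ψ i (Function.update x j c i).out =
        ψ j c.out * ∏ i ∈ univ \ {j}, ψ i (x i).out := fun c => by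
      simp_rw [Function.apply_update (fun i (a : K ⧸ L) => ψ i a.out)]
      rw [prod_update_of_mem (mem_univ j)]
    simp_rw [hupdate, ← ite_zero_mul]
    rw [← sum_mul, (hψ j).sum_quotient_ite_mem_dcoset hm,
      prod_eq_mul_prod_sdiff_singleton_of_mem (mem_univ j) fun i => ψ i (x i).out]
    ring
  simp only [mulVec, dotProduct, PmatC, of_apply, Pi.smul_apply, smul_eq_mul]
  rw [sum_step_mul hx₀, sum_congr rfl fun j _ => hcoord j, ← sum_mul, ← mul_sum, sum_sub_distrib,
    sum_const, card_univ, Fintype.card_fin]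
  field_simp
  ring

lemma sum_PmatC_pow_eQ_mul_prod (hx₀ : x₀ ∉ L) (hm : m * Nat.card L = Nat.card (dcoset K L x₀))
    (hn : n ≠ 0) {ω : K → ℂ} (hω : IsZSF K L ω) (T : Finset (Fin n)) (N : ℕ) :
    ∑ x, (PmatC K L x₀ n m p ^ N) (eQ K L n) x * ∏ j ∈ T, ω (x j).out =
      (1 - m * p / n * (#T * (1 - ω x₀))) ^ N := by
  have hψ : ∀ j, IsZSF K L (if j ∈ T then ω else 1) := fun j => by
    split_ifs
    exacts [hω, IsZSF.one]
  have h := congrFun (pow_mulVec_of_mulVec_eq_smul (PmatC_mulVec_prod (p := p) hx₀ hm hn hψ) N)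
    (eQ K L n)
  simp only [mulVec, dotProduct, Pi.smul_apply, smul_eq_mul, ite_apply, Pi.one_apply,
    prod_ite_mem, univ_inter, eQ, hω.apply_mk_out, hω.1, prod_const_one, mul_one] at h
  have hrate : ∑ j, (1 - if j ∈ T then ω x₀ else 1) = #T * (1 - ω x₀) := by
    simp_rw [apply_ite (fun z : ℂ => 1 - z), sub_self]
    rw [sum_ite_mem, univ_inter, sum_const, nsmul_eq_mul]
  rw [h, hrate]

lemma PmatR_mem_rowStochastic (hx₀ : x₀ ∉ L) (hm : m * Nat.card L = Nat.card (dcoset K L x₀))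
    (hn : n ≠ 0) (hp : 0 ≤ p) (hmp : m * p ≤ 1) :
    PmatR K L x₀ n m p ∈ rowStochastic ℝ (Fin n → K ⧸ L) := by
  refine mem_rowStochastic_iff_sum.mpr ⟨fun x y => ?_, fun x => ?_⟩
  · simp only [PmatR, step, of_apply]
    split_ifs
    · linarith
    · positivity
    · rfl
  · have h := congrFun (PmatC_mulVec_prod (p := p) hx₀ hm hn fun _ => IsZSF.one) x
    simp [mulVec, dotProduct, PmatC] at h
    exact_mod_cast h

lemma PmatC_pow_apply (N : ℕ) (x y : Fin n → K ⧸ L) :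
    (PmatC K L x₀ n m p ^ N) x y = (PmatR K L x₀ n m p ^ N) x y := by
  have h : PmatC K L x₀ n m p = Complex.ofRealHom.mapMatrix (PmatR K L x₀ n m p) := rfl
  rw [h, ← map_pow]
  rfl

end UrnChain

theorem variance_of_Q_nstep_le_general
    (K : Type) [Group K] [Fintype K] (L : Subgroup K)
    (s : ℕ) (hs : 2 ≤ s)
    (ω : Fin s → K → ℂ)
    (hzsf : ∀ i, IsZSF K L (ω i))
    (x₀ : K) (hx₀ : x₀ ∉ L)
    (m : ℕ) (hm : m * Nat.card L = Nat.card (dcoset K L x₀))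
    (hreal : ∀ i, (ω i x₀).im = 0)
    (p : ℝ) (hp0 : 0 < m * p) (hp2 : m * p ≤ 1 / 2)
    (n : ℕ) (hn : 4 ≤ n) (N : ℕ) :
    ((∑ x : Fin n → K ⧸ L,
          (PmatC K L x₀ n m p ^ N) (eQ K L n) x *
            ((n : ℂ)⁻¹ * ∑ j : Fin n, ω ⟨1, hs⟩ (x j).out) ^ 2) -
        (∑ x : Fin n → K ⧸ L,
          (PmatC K L x₀ n m p ^ N) (eQ K L n) x *
            ((n : ℂ)⁻¹ * ∑ j : Fin n, ω ⟨1, hs⟩ (x j).out)) ^ 2).re ≤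
      1 / n := by
  have hn0 : n ≠ 0 := by omega
  have hω : IsZSF K L (ω ⟨1, hs⟩) := hzsf _
  set w := (ω ⟨1, hs⟩ x₀).re
  have hw : ω ⟨1, hs⟩ x₀ = w := Complex.ext rfl (hreal _)
  have hw1 : |w| ≤ 1 := (Complex.abs_re_le_norm _).trans (hω.norm_le_one x₀)
  have hp : 0 ≤ p := (pos_of_mul_pos_right hp0 (Nat.cast_nonneg m)).le
  set u := m * p * (1 - w) / n with hu_def
  have hu : u ≤ 1 / 2 := by
    have hmp : m * p * (1 - w) ≤ 1 := by nlinarith [abs_le.mp hw1]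
    have hnR : (4 : ℝ) ≤ n := by exact_mod_cast hn
    rw [div_le_iff₀ (by positivity)]
    linarith
  have hmoment : ∀ T : Finset (Fin n), ∑ x, ((PmatR K L x₀ n m p ^ N) (eQ K L n) x : ℂ) *
      ∏ j ∈ T, ω ⟨1, hs⟩ (x j).out = ((1 - #T * u) ^ N : ℝ) := fun T => by
    simp_rw [← PmatC_pow_apply]
    rw [sum_PmatC_pow_eQ_mul_prod hx₀ hm hn0 hω, hw, hu_def]
    push_cast
    ring
  have hP := pow_mem (PmatR_mem_rowStochastic hx₀ hm hn0 hp (by linarith)) N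
  simp only [PmatC_pow_apply]
  refine re_variance_mean_le hn0 (fun x => nonneg_of_mem_rowStochastic hP)
    (sum_row_of_mem_rowStochastic hP _) (fun j x => hω.norm_le_one _) (a := (1 - u) ^ N)
    (b := (1 - 2 * u) ^ N) (fun j => by simpa using hmoment {j})
    (fun j k hjk => by simpa [prod_pair hjk, card_pair hjk] using hmoment {j, k})
    (pow_nonneg (by linarith) N) (one_sub_two_mul_pow_le (by linarith) N)

/-- Variance bound under the `N`-step distribution (for `n ≥ 4`):
`V_{ν_N}(Q) = E_{ν_N}(Q²) - E_{ν_N}(Q)² ≤ 1/n` for every `N`. -/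
theorem variance_of_Q_nstep_le
    (K : Type) [Group K] [Fintype K] (L : Subgroup K)
    (hGP : IsGelfandPair K L)
    (s : ℕ) [NeZero s] (hs : 2 ≤ s)
    (ω : Fin s → K → ℂ)
    (hzsf : ∀ i, IsZSF K L (ω i))
    (hω0 : ∀ g : K, ω 0 g = 1)
    (hinj : Function.Injective ω)
    (hcomplete : s = Nat.card (DoubleCoset.Quotient (L : Set K) (L : Set K)))
    (x₀ : K) (hx₀ : x₀ ∉ L)
    (m : ℕ) (hm : m * Nat.card L = Nat.card (dcoset K L x₀))
    (hreal : ∀ i, (ω i x₀).im = 0)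
    (M : ℝ)
    (hM : IsGreatest (Set.range fun i : {i : Fin s // i ≠ 0} => (ω (i : Fin s) x₀).re) M)
    (hM1 : M < 1)
    (p : ℝ) (hp0 : 0 < m * p) (hp2 : m * p ≤ 1 / 2)
    (a : Fin s → ℂ)
    (ha : ∀ g : K, (ω ⟨1, hs⟩ g) ^ 2 = ∑ j : Fin s, a j * ω j g)
    (n : ℕ) (hn : 4 ≤ n) (N : ℕ) :
    ((∑ x : Fin n → K ⧸ L,
          (PmatC K L x₀ n m p ^ N) (eQ K L n) x *
            ((n : ℂ)⁻¹ * ∑ j : Fin n, ω ⟨1, hs⟩ (x j).out) ^ 2) -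
        (∑ x : Fin n → K ⧸ L,
          (PmatC K L x₀ n m p ^ N) (eQ K L n) x *
            ((n : ℂ)⁻¹ * ∑ j : Fin n, ω ⟨1, hs⟩ (x j).out)) ^ 2).re ≤
      1 / n :=
  variance_of_Q_nstep_le_general K L s hs ω hzsf x₀ hx₀ m hm hreal p hp0 hp2 n hn N
end
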